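/- arXiv:0805.3379 — 7 statements merged into one kernel-verified Lean document; each statement's English description precedes it below -/
import Mathlib

section
/- Let B : P → M(P), x ↦ dB_x, be any continuous section of the barycenter map (i.e. ∫_P z dB_x(z) = x for all x ∈ P). For a positive integer N define B_N(f)(x) := ∫_P f(z) dB_x^N(z), where dB_x^N is the dilated N-fold convolution power of dB_x. Then for every f ∈ C(P), B_N(f) converges uniformly on P to f as N → ∞. -/
/- Setting: `P ⊆ ℝ^m` is a compact convex polytope (convex hull of a finite set) with
nonempty interior.  `M(P)` is modelled by measures on `ℝ^m` that are probability measures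
giving full mass to `P`; weak-* continuity of `x ↦ dB_x` is expressed by continuity of
`x ↦ ∫ f dB_x` for every `f` continuous on `P`. -/

open MeasureTheory Filter Set
open scoped Topology ENNReal

noncomputable section

/-- The dilated `N`-fold convolution power `dB^N = (D_{1/N})_* (dB ∗ ⋯ ∗ dB)` of a measure. -/
def dilConvPow {m : ℕ} (μ : Measure (EuclideanSpace ℝ (Fin m))) (N : ℕ) :
    Measure (EuclideanSpace ℝ (Fin m)) :=
  Measure.map (fun z : Fin N → EuclideanSpace ℝ (Fin m) => (N : ℝ)⁻¹ • ∑ i, z i)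
    (Measure.pi fun _ => μ)

open ProbabilityTheory

/-! Bernstein's argument. Under `dB_x^N` each coordinate of `z` is the average of `N` independent
copies of that coordinate under `dB_x`, so `dB_x^N` has barycenter `x` and, by additivity of
variance, `∫ ‖z - x‖² dB_x^N = (1/N) ∫ ‖z - x‖² dB_x ≤ diam(P)² / N`. Splitting `P` into the
`δ`-ball around `x`, where `f` oscillates by less than `ε`, and its complement, where
`‖f z - f x‖ ≤ 2 ‖f‖_∞ ‖z - x‖² / δ²` (Chebyshev), gives
`‖∫ f dB_x^N - f x‖ ≤ ε + 2 ‖f‖_∞ diam(P)² / (δ² N)` uniformly in `x ∈ P`. -/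

section Concentration

variable {E F : Type*} [NormedAddCommGroup E] [MeasurableSpace E] [OpensMeasurableSpace E]
  [NormedAddCommGroup F] {K : Set E}

lemma ContinuousOn.memLp_of_ae_mem {ν : Measure E} [IsFiniteMeasure ν] {f : E → F}
    (hf : ContinuousOn f K) (hK : IsCompact K) (hν : ∀ᵐ z ∂ν, z ∈ K) (p : ℝ≥0∞) :
    MemLp f p ν := by
  obtain ⟨C, hC⟩ := hK.exists_bound_of_continuousOn hf
  refine MemLp.of_bound ?_ C (hν.mono hC)
  simpa only [Measure.restrict_eq_self_of_ae_mem hν] using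
    hf.aestronglyMeasurable_of_isCompact (μ := ν) hK hK.measurableSet

lemma integral_norm_sub_sq_le_diam_sq {ν : Measure E} [IsProbabilityMeasure ν]
    (hK : IsCompact K) (hν : ∀ᵐ z ∂ν, z ∈ K) {x : E} (hx : x ∈ K) :
    ∫ z, ‖z - x‖ ^ 2 ∂ν ≤ Metric.diam K ^ 2 := by
  calc ∫ z, ‖z - x‖ ^ 2 ∂ν ≤ ∫ _, Metric.diam K ^ 2 ∂ν := by
        refine integral_mono_ae ((continuous_id.sub continuous_const).norm.pow 2 |>.continuousOn
          |>.memLp_of_ae_mem hK hν 1 |>.integrable le_rfl) (integrable_const _) ?_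
        filter_upwards [hν] with z hz
        rw [← dist_eq_norm]
        gcongr
        exact Metric.dist_le_diam_of_mem hK.isBounded hz hx
    _ = Metric.diam K ^ 2 := by simp

variable [NormedSpace ℝ F] [CompleteSpace F]

lemma norm_integral_sub_le_of_forall_dist_lt {ν : Measure E} [IsProbabilityMeasure ν]
    (hK : IsCompact K) (hν : ∀ᵐ z ∂ν, z ∈ K) {f : E → F} (hf : ContinuousOn f K) {M ε δ : ℝ}
    (hM : ∀ z ∈ K, ‖f z‖ ≤ M) (hδ : 0 < δ) {x : E} (hx : x ∈ K)
    (hfx : ∀ z ∈ K, dist z x < δ → dist (f z) (f x) < ε) :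
    ‖∫ z, f z ∂ν - f x‖ ≤ ε + 2 * M / δ ^ 2 * ∫ z, ‖z - x‖ ^ 2 ∂ν := by
  have hmom : Integrable (fun z => ‖z - x‖ ^ 2) ν :=
    (continuous_id.sub continuous_const).norm.pow 2 |>.continuousOn.memLp_of_ae_mem hK hν 1
      |>.integrable le_rfl
  have hε : 0 < ε := by simpa using hfx x hx (by simpa using hδ)
  have hc : 0 ≤ 2 * M / δ ^ 2 := by
    have := (norm_nonneg _).trans (hM x hx)
    positivity
  have hpt : ∀ z ∈ K, ‖f z - f x‖ ≤ ε + 2 * M / δ ^ 2 * ‖z - x‖ ^ 2 := by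
    intro z hz
    by_cases hzx : dist z x < δ
    · have := hfx z hz hzx
      rw [dist_eq_norm] at this
      nlinarith [sq_nonneg ‖z - x‖]
    · have hfar : δ ^ 2 ≤ ‖z - x‖ ^ 2 := by
        rw [← dist_eq_norm]; exact pow_le_pow_left₀ hδ.le (not_lt.1 hzx) 2
      calc ‖f z - f x‖ ≤ M + M := (norm_sub_le _ _).trans (add_le_add (hM z hz) (hM x hx))
        _ = 2 * M / δ ^ 2 * δ ^ 2 := by field_simp; ring
        _ ≤ 2 * M / δ ^ 2 * ‖z - x‖ ^ 2 := by gcongr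
        _ ≤ ε + 2 * M / δ ^ 2 * ‖z - x‖ ^ 2 := by linarith
  have hfint : Integrable f ν := (hf.memLp_of_ae_mem hK hν 1).integrable le_rfl
  calc ‖∫ z, f z ∂ν - f x‖ = ‖∫ z, (f z - f x) ∂ν‖ := by
        rw [integral_sub hfint (integrable_const _), integral_const, probReal_univ, one_smul]
    _ ≤ ∫ z, ‖f z - f x‖ ∂ν := norm_integral_le_integral_norm _
    _ ≤ ∫ z, (ε + 2 * M / δ ^ 2 * ‖z - x‖ ^ 2) ∂ν :=
        integral_mono_ae (hfint.sub (integrable_const _)).norm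
          ((integrable_const _).add (hmom.const_mul _)) (hν.mono hpt)
    _ = ε + 2 * M / δ ^ 2 * ∫ z, ‖z - x‖ ^ 2 ∂ν := by
        rw [integral_add (integrable_const _) (hmom.const_mul _), integral_const, probReal_univ,
          one_smul, integral_const_mul]

theorem tendstoUniformlyOn_integral_of_integral_norm_sub_sq_le {ι : Type*} {l : Filter ι}
    (hK : IsCompact K) {f : E → F} (hf : ContinuousOn f K) {ν : ι → E → Measure E}
    {r : ι → ℝ} (hr : Tendsto r l (𝓝 0))
    (hν : ∀ᶠ i in l, ∀ x ∈ K, IsProbabilityMeasure (ν i x) ∧ (∀ᵐ z ∂ν i x, z ∈ K) ∧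
      ∫ z, ‖z - x‖ ^ 2 ∂ν i x ≤ r i) :
    TendstoUniformlyOn (fun i x => ∫ z, f z ∂ν i x) f l K := by
  rw [Metric.tendstoUniformlyOn_iff]
  intro ε hε
  obtain ⟨δ, hδ, hfδ⟩ := Metric.uniformContinuousOn_iff.1
    (hK.uniformContinuousOn_of_continuous hf) (ε / 2) (half_pos hε)
  obtain ⟨M, hM⟩ := hK.exists_bound_of_continuousOn hf
  have hsmall : ∀ᶠ i in l, 2 * M / δ ^ 2 * r i < ε / 2 := by
    have := hr.const_mul (2 * M / δ ^ 2)
    rw [mul_zero] at this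
    exact this.eventually (gt_mem_nhds (half_pos hε))
  filter_upwards [hν, hsmall] with i hi hsmall x hx
  obtain ⟨hprob, hsupp, hmom⟩ := hi x hx
  have hM0 : 0 ≤ M := (norm_nonneg _).trans (hM x hx)
  rw [dist_comm, dist_eq_norm]
  calc ‖∫ z, f z ∂ν i x - f x‖ ≤ ε / 2 + 2 * M / δ ^ 2 * ∫ z, ‖z - x‖ ^ 2 ∂ν i x :=
        norm_integral_sub_le_of_forall_dist_lt hK hsupp hf hM hδ hx fun z hz hzx =>
          hfδ z hz x hx hzx
    _ ≤ ε / 2 + 2 * M / δ ^ 2 * r i := by gcongr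
    _ < ε := by linarith

end Concentration

lemma integral_norm_sub_integral_sq_eq_sum_variance {ι : Type*} [Fintype ι]
    {ν : Measure (EuclideanSpace ℝ ι)} [IsFiniteMeasure ν] (hν : MemLp id 2 ν) :
    ∫ z, ‖z - ∫ a, a ∂ν‖ ^ 2 ∂ν = ∑ j, Var[fun z => z j; ν] := by
  have hcoord : ∀ j, MemLp (fun z : EuclideanSpace ℝ ι => z j) 2 ν := fun j =>
    hν.continuousLinearMap_comp (EuclideanSpace.proj j : StrongDual ℝ (EuclideanSpace ℝ ι))
  set c := ∫ a, a ∂ν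
  calc ∫ z, ‖z - c‖ ^ 2 ∂ν = ∫ z, ∑ j, (z j - c j) ^ 2 ∂ν := by
        simp_rw [EuclideanSpace.real_norm_sq_eq, PiLp.sub_apply]
    _ = ∑ j, ∫ z, (z j - c j) ^ 2 ∂ν :=
        integral_finsetSum _ fun j _ => ((hcoord j).sub (memLp_const _)).integrable_sq
    _ = ∑ j, Var[fun z => z j; ν] := by
        refine Finset.sum_congr rfl fun j _ => ?_
        rw [variance_eq_integral (hcoord j).aestronglyMeasurable.aemeasurable]
        congr! 4
        exact ((EuclideanSpace.proj j : StrongDual ℝ (EuclideanSpace ℝ ι)).integral_comp_comm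
          (hν.integrable one_le_two)).symm

section DilConvPow

variable {m : ℕ}

lemma measurable_dilConvPow_map (N : ℕ) :
    Measurable fun z : Fin N → EuclideanSpace ℝ (Fin m) => (N : ℝ)⁻¹ • ∑ i, z i := by
  fun_prop

instance isProbabilityMeasure_dilConvPow (μ : Measure (EuclideanSpace ℝ (Fin m)))
    [IsProbabilityMeasure μ] (N : ℕ) : IsProbabilityMeasure (dilConvPow μ N) :=
  Measure.isProbabilityMeasure_map (measurable_dilConvPow_map N).aemeasurable

variable {μ : Measure (EuclideanSpace ℝ (Fin m))} [IsProbabilityMeasure μ] {N : ℕ}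

lemma ae_mem_dilConvPow {P : Set (EuclideanSpace ℝ (Fin m))} (hP : Convex ℝ P)
    (hPm : MeasurableSet P) (hμ : ∀ᵐ z ∂μ, z ∈ P) (hN : N ≠ 0) :
    ∀ᵐ z ∂dilConvPow μ N, z ∈ P := by
  rw [dilConvPow, ae_map_iff (p := (· ∈ P)) (measurable_dilConvPow_map N).aemeasurable hPm]
  have hall : ∀ᵐ w ∂Measure.pi (fun _ : Fin N => μ), ∀ i, w i ∈ P :=
    ae_all_iff.2 fun i => (measurePreserving_eval _ i).quasiMeasurePreserving.ae hμ
  filter_upwards [hall] with w hw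
  rw [Finset.smul_sum]
  refine hP.sum_mem (fun _ _ => by positivity) ?_ fun i _ => hw i
  simp [hN]

lemma memLp_id_dilConvPow (hμ : MemLp id 2 μ) : MemLp id 2 (dilConvPow μ N) := by
  rw [dilConvPow, memLp_map_measure_iff aestronglyMeasurable_id
    (measurable_dilConvPow_map N).aemeasurable]
  have hsum : MemLp (fun w : Fin N → EuclideanSpace ℝ (Fin m) => ∑ i, w i) 2
      (Measure.pi fun _ => μ) :=
    memLp_finsetSum Finset.univ fun i _ => hμ.comp_measurePreserving (measurePreserving_eval _ i)
  exact hsum.const_smul (N : ℝ)⁻¹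

lemma integral_id_dilConvPow (hμ : Integrable id μ) (hN : N ≠ 0) :
    ∫ z, z ∂dilConvPow μ N = ∫ z, z ∂μ := by
  rw [dilConvPow, integral_map (f := fun z => z) (measurable_dilConvPow_map N).aemeasurable
    aestronglyMeasurable_id, integral_smul]
  have := integral_finsetSum (μ := Measure.pi fun _ : Fin N => μ) Finset.univ
    fun i _ => integrable_eval (i := i) hμ
  simp only [this, integral_eval, Finset.sum_const, Finset.card_univ, Fintype.card_fin]
  rw [← Nat.cast_smul_eq_nsmul ℝ, smul_smul, inv_mul_cancel₀ (Nat.cast_ne_zero.2 hN), one_smul]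

lemma variance_dilConvPow (ℓ : StrongDual ℝ (EuclideanSpace ℝ (Fin m))) (hμ : MemLp id 2 μ) :
    Var[ℓ; dilConvPow μ N] = Var[ℓ; μ] / N := by
  rw [dilConvPow, variance_map ℓ.continuous.aemeasurable
    (measurable_dilConvPow_map N).aemeasurable]
  have hcomp : ⇑ℓ ∘ (fun z : Fin N → EuclideanSpace ℝ (Fin m) => (N : ℝ)⁻¹ • ∑ i, z i) =
      fun z => (N : ℝ)⁻¹ * (∑ i, fun w : Fin N → _ => ℓ (w i)) z := by
    ext z
    simp only [Function.comp_apply, map_smul, map_sum, smul_eq_mul, Finset.sum_apply]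
  rw [hcomp, variance_const_mul,
    variance_sum_pi (X := fun _ => ℓ) fun _ => hμ.continuousLinearMap_comp ℓ, Finset.sum_const,
    Finset.card_univ, Fintype.card_fin, nsmul_eq_mul]
  field_simp

lemma integral_norm_sub_sq_dilConvPow (hμ : MemLp id 2 μ) (hN : N ≠ 0) :
    ∫ z, ‖z - ∫ a, a ∂μ‖ ^ 2 ∂dilConvPow μ N = (∫ z, ‖z - ∫ a, a ∂μ‖ ^ 2 ∂μ) / N := by
  conv_lhs => rw [← integral_id_dilConvPow (hμ.integrable one_le_two) hN]
  rw [integral_norm_sub_integral_sq_eq_sum_variance (memLp_id_dilConvPow hμ),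
    integral_norm_sub_integral_sq_eq_sum_variance hμ, Finset.sum_div]
  exact Finset.sum_congr rfl fun j _ => variance_dilConvPow (EuclideanSpace.proj j) hμ

end DilConvPow

theorem bernsteinApprox_tendstoUniformlyOn_general
    {m : ℕ} (P : Set (EuclideanSpace ℝ (Fin m)))
    (hP : ∃ V : Finset (EuclideanSpace ℝ (Fin m)),
      P = convexHull ℝ (V : Set (EuclideanSpace ℝ (Fin m))))
    (B : EuclideanSpace ℝ (Fin m) → Measure (EuclideanSpace ℝ (Fin m)))
    (hprob : ∀ x ∈ P, IsProbabilityMeasure (B x))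
    (hsupp : ∀ x ∈ P, B x Pᶜ = 0)
    (hbary : ∀ x ∈ P, (∫ z, z ∂(B x)) = x)
    (f : EuclideanSpace ℝ (Fin m) → ℂ) (hf : ContinuousOn f P) :
    TendstoUniformlyOn (fun (N : ℕ) (x : EuclideanSpace ℝ (Fin m)) =>
      ∫ z, f z ∂(dilConvPow (B x) N)) f atTop P := by
  obtain ⟨V, hV⟩ := hP
  have hPc : IsCompact P := hV ▸ V.finite_toSet.isCompact_convexHull (𝕜 := ℝ)
  have hPconv : Convex ℝ P := hV ▸ convex_convexHull ℝ _
  refine tendstoUniformlyOn_integral_of_integral_norm_sub_sq_le hPc hf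
    (tendsto_const_div_atTop_nhds_zero_nat (Metric.diam P ^ 2)) ?_
  filter_upwards [eventually_ne_atTop 0] with N hN x hx
  have := hprob x hx
  have hμP : ∀ᵐ z ∂B x, z ∈ P := hsupp x hx
  refine ⟨inferInstance, ae_mem_dilConvPow hPconv hPc.measurableSet hμP hN, ?_⟩
  have hμ : MemLp id 2 (B x) := continuous_id.continuousOn.memLp_of_ae_mem hPc hμP 2
  calc ∫ z, ‖z - x‖ ^ 2 ∂dilConvPow (B x) N = (∫ z, ‖z - x‖ ^ 2 ∂B x) / N := by
        simpa only [hbary x hx] using integral_norm_sub_sq_dilConvPow hμ hN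
    _ ≤ Metric.diam P ^ 2 / N := by
        gcongr
        exact integral_norm_sub_sq_le_diam_sq hPc hμP hx

/-- If `B : P → M(P)` is any continuous section of the barycenter map and
`B_N(f)(x) = ∫ f dB_x^N`, then `B_N(f) → f` uniformly on `P` for every `f ∈ C(P)`. -/
theorem bernsteinApprox_tendstoUniformlyOn
    {m : ℕ} (P : Set (EuclideanSpace ℝ (Fin m)))
    (hP : ∃ V : Finset (EuclideanSpace ℝ (Fin m)),
      P = convexHull ℝ (V : Set (EuclideanSpace ℝ (Fin m))))
    (hPo : (interior P).Nonempty)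
    (B : EuclideanSpace ℝ (Fin m) → Measure (EuclideanSpace ℝ (Fin m)))
    (hprob : ∀ x ∈ P, IsProbabilityMeasure (B x))
    (hsupp : ∀ x ∈ P, B x Pᶜ = 0)
    (hbary : ∀ x ∈ P, (∫ z, z ∂(B x)) = x)
    (hcont : ∀ f : EuclideanSpace ℝ (Fin m) → ℂ, ContinuousOn f P →
      ContinuousOn (fun x => ∫ z, f z ∂(B x)) P)
    (f : EuclideanSpace ℝ (Fin m) → ℂ) (hf : ContinuousOn f P) :
    TendstoUniformlyOn (fun (N : ℕ) (x : EuclideanSpace ℝ (Fin m)) =>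
      ∫ z, f z ∂(dilConvPow (B x) N)) f atTop P :=
  bernsteinApprox_tendstoUniformlyOn_general P hP B hprob hsupp hbary f hf

end
end

section
/- Let B be a Bernstein measure on P with defining matrix K : P° → Sym(m,ℝ). For every x ∈ P°, the matrix A(x) = ∫_P (z−x)⊗(z−x) dB_x(z) is positive definite and is the inverse of K(x), i.e. A(x)K(x) = K(x)A(x) = Id; in particular K(x) is invertible and positive definite for every x ∈ P°. -/
/- Setting: `P ⊆ ℝ^m` is a compact convex polytope (convex hull of a finite set) with
nonempty interior.  `M(P)` is modelled by measures on `ℝ^m` that are probability measures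
giving full mass to `P`; weak-* continuity of `x ↦ dB_x` is expressed by continuity of
`x ↦ ∫ f dB_x` for every `f` continuous on `P`. -/

open MeasureTheory Filter Set
open scoped RealInnerProductSpace ENNReal Topology

noncomputable section

/-- A Bernstein measure on a polytope `P ⊆ ℝ^m`: a weak-* continuous section `x ↦ dB_x`
of the barycenter map such that `B(f)` is continuous on `P` and smooth on `P°` for every
`f ∈ C(P)`, together with a smooth symmetric defining matrix `K` on `P°` satisfying
`∇B(f)(x) = ∫ f(z) K(x)(z−x) dB_x(z)`. -/
structure BernsteinMeasure (m : ℕ) (P : Set (EuclideanSpace ℝ (Fin m))) where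
  meas : EuclideanSpace ℝ (Fin m) → Measure (EuclideanSpace ℝ (Fin m))
  isProb : ∀ x ∈ P, IsProbabilityMeasure (meas x)
  suppIn : ∀ x ∈ P, meas x Pᶜ = 0
  bary : ∀ x ∈ P, (∫ z, z ∂(meas x)) = x
  weakCont : ∀ f : EuclideanSpace ℝ (Fin m) → ℂ, ContinuousOn f P →
    ContinuousOn (fun x => ∫ z, f z ∂(meas x)) P
  smoothOn : ∀ f : EuclideanSpace ℝ (Fin m) → ℂ, ContinuousOn f P →
    ContDiffOn ℝ (⊤ : ℕ∞) (fun x => ∫ z, f z ∂(meas x)) (interior P)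
  K : EuclideanSpace ℝ (Fin m) → (EuclideanSpace ℝ (Fin m) →L[ℝ] EuclideanSpace ℝ (Fin m))
  K_symm : ∀ x ∈ interior P, ∀ u v, ⟪K x u, v⟫ = ⟪u, K x v⟫
  K_smooth : ContDiffOn ℝ (⊤ : ℕ∞) K (interior P)
  grad_eq : ∀ f : EuclideanSpace ℝ (Fin m) → ℂ, ContinuousOn f P →
    ∀ x ∈ interior P, ∀ v : EuclideanSpace ℝ (Fin m),
      fderiv ℝ (fun y => ∫ z, f z ∂(meas y)) x v
        = ∫ z, f z * ((⟪K x (z - x), v⟫ : ℝ) : ℂ) ∂(meas x)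

/-- The covariance matrix `A(x) = ∫ (z−x)⊗(z−x) dμ(z)`, as a map acting on a vector `v`. -/
def covMap {m : ℕ} (μ : Measure (EuclideanSpace ℝ (Fin m)))
    (x v : EuclideanSpace ℝ (Fin m)) : EuclideanSpace ℝ (Fin m) :=
  ∫ z, ⟪z - x, v⟫ • (z - x) ∂μ

private lemma bm_integrable {m : ℕ} {P : Set (EuclideanSpace ℝ (Fin m))}
    (hPc : IsCompact P) {μ : Measure (EuclideanSpace ℝ (Fin m))}
    [IsFiniteMeasure μ] (hμ : μ Pᶜ = 0)
    {G : Type} [NormedAddCommGroup G]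
    {F : EuclideanSpace ℝ (Fin m) → G} (hF : Continuous F) :
    Integrable F μ := by
  obtain ⟨C, hC⟩ := hPc.exists_bound_of_continuousOn hF.continuousOn
  refine ⟨hF.aestronglyMeasurable, HasFiniteIntegral.of_bounded (C := C) ?_⟩
  have hP : ∀ᵐ z ∂μ, z ∈ P := by
    rw [MeasureTheory.ae_iff]
    exact hμ
  filter_upwards [hP] with z hz using hC z hz

/-- For a Bernstein measure `B` on `P` with defining matrix `K`, for every
`x ∈ P°` the covariance matrix `A(x) = ∫ (z−x)⊗(z−x) dB_x(z)` is positive definite and is the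
inverse of `K(x)`; in particular `K(x)` is invertible and positive definite. -/
theorem covMap_posDef_and_inverse_of_definingMatrix
    {m : ℕ} (P : Set (EuclideanSpace ℝ (Fin m)))
    (hP : ∃ V : Finset (EuclideanSpace ℝ (Fin m)),
      P = convexHull ℝ (V : Set (EuclideanSpace ℝ (Fin m))))
    (hPo : (interior P).Nonempty)
    (B : BernsteinMeasure m P) :
    ∀ x ∈ interior P,
      (∀ v, v ≠ 0 → 0 < ⟪covMap (B.meas x) x v, v⟫) ∧
      (∀ v, covMap (B.meas x) x (B.K x v) = v ∧ B.K x (covMap (B.meas x) x v) = v) ∧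
      (∀ v, v ≠ 0 → 0 < ⟪B.K x v, v⟫) := by
  intro x hx
  have hxP : x ∈ P := interior_subset hx
  obtain ⟨V, hV⟩ := hP
  have hPc : IsCompact P := hV ▸ V.finite_toSet.isCompact_convexHull ℝ
  set μ := B.meas x with hμdef
  haveI : IsProbabilityMeasure μ := B.isProb x hxP
  have hcompl : μ Pᶜ = 0 := B.suppIn x hxP
  have hid : Integrable (fun z : EuclideanSpace ℝ (Fin m) => z) μ :=
    bm_integrable hPc hcompl continuous_id
  have hsub : Integrable (fun z : EuclideanSpace ℝ (Fin m) => z - x) μ :=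
    hid.sub (integrable_const x)
  have hmean : (∫ z, (z - x) ∂μ) = 0 := by
    rw [integral_sub hid (integrable_const x), B.bary x hxP, integral_const]
    simp
  -- Step 0 : centered first moments vanish
  have step0 : ∀ u : EuclideanSpace ℝ (Fin m), (∫ z, ⟪z - x, u⟫ ∂μ) = 0 := by
    intro u
    have h1 := ContinuousLinearMap.integral_comp_comm (innerSL ℝ u) hsub
    simp only [innerSL_apply_apply] at h1
    rw [hmean, inner_zero_right] at h1
    rw [← h1]
    exact integral_congr_ae (Eventually.of_forall fun z => real_inner_comm _ _)
  -- integrability of covariance integrand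
  have hFint : ∀ u : EuclideanSpace ℝ (Fin m),
      Integrable (fun z => ⟪z - x, u⟫ • (z - x)) μ := fun u =>
    bm_integrable hPc hcompl
      (((continuous_id.sub continuous_const).inner continuous_const :
          Continuous fun z : EuclideanSpace ℝ (Fin m) => ⟪z - x, u⟫).smul
        (continuous_id.sub continuous_const))
  -- Step B : pairing of covMap with a vector is the second moment
  have stepB : ∀ u w : EuclideanSpace ℝ (Fin m),
      ⟪covMap μ x u, w⟫ = ∫ z, ⟪z - x, u⟫ * ⟪z - x, w⟫ ∂μ := by
    intro u w
    have h1 := ContinuousLinearMap.integral_comp_comm (innerSL ℝ w) (hFint u)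
    simp only [innerSL_apply_apply, inner_smul_right] at h1
    rw [covMap, real_inner_comm, ← h1]
    refine integral_congr_ae (Eventually.of_forall fun z => ?_)
    show ⟪z - x, u⟫ * ⟪w, z - x⟫ = ⟪z - x, u⟫ * ⟪z - x, w⟫
    rw [real_inner_comm w (z - x)]
  -- Key identity from grad_eq applied to linear test functions
  have key : ∀ v w : EuclideanSpace ℝ (Fin m),
      (∫ z, ⟪w, z⟫ * ⟪B.K x (z - x), v⟫ ∂μ) = ⟪w, v⟫ := by
    intro v w
    have hfc : ContinuousOn (fun z : EuclideanSpace ℝ (Fin m) => ((⟪w, z⟫ : ℝ) : ℂ)) P :=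
      (Complex.continuous_ofReal.comp (continuous_const.inner continuous_id)).continuousOn
    have hgrad := B.grad_eq _ hfc x hx v
    have hEq : (fun y => ∫ z, ((⟪w, z⟫ : ℝ) : ℂ) ∂(B.meas y)) =ᶠ[𝓝 x]
        ⇑(Complex.ofRealCLM.comp (innerSL ℝ w)) := by
      filter_upwards [isOpen_interior.mem_nhds hx] with y hy
      have hyP : y ∈ P := interior_subset hy
      haveI : IsProbabilityMeasure (B.meas y) := B.isProb y hyP
      have hidy : Integrable (fun z : EuclideanSpace ℝ (Fin m) => z) (B.meas y) :=
        bm_integrable hPc (B.suppIn y hyP) continuous_id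
      have h2 := ContinuousLinearMap.integral_comp_comm (innerSL ℝ w) hidy
      simp only [innerSL_apply_apply] at h2
      rw [B.bary y hyP] at h2
      have h3 : (∫ z, ((⟪w, z⟫ : ℝ) : ℂ) ∂(B.meas y))
          = ((∫ z, ⟪w, z⟫ ∂(B.meas y) : ℝ) : ℂ) := integral_ofReal
      rw [h3, h2]
      simp
    have hfd : fderiv ℝ (fun y => ∫ z, ((⟪w, z⟫ : ℝ) : ℂ) ∂(B.meas y)) x v
        = ((⟪w, v⟫ : ℝ) : ℂ) := by
      rw [hEq.fderiv_eq, ContinuousLinearMap.fderiv]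
      simp
    rw [hfd] at hgrad
    have hR : (∫ z, ((⟪w, z⟫ : ℝ) : ℂ) * ((⟪B.K x (z - x), v⟫ : ℝ) : ℂ) ∂μ)
        = ((∫ z, ⟪w, z⟫ * ⟪B.K x (z - x), v⟫ ∂μ : ℝ) : ℂ) := by
      have h4 : (∫ z, ((⟪w, z⟫ * ⟪B.K x (z - x), v⟫ : ℝ) : ℂ) ∂μ)
          = ((∫ z, ⟪w, z⟫ * ⟪B.K x (z - x), v⟫ ∂μ : ℝ) : ℂ) := integral_ofReal
      rw [← h4]
      refine integral_congr_ae (Eventually.of_forall fun z => ?_)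
      show ((⟪w, z⟫ : ℝ) : ℂ) * ((⟪B.K x (z - x), v⟫ : ℝ) : ℂ) = _
      push_cast
      ring
    rw [hR] at hgrad
    exact_mod_cast hgrad.symm
  -- Step A : second-moment identity against K
  have stepA : ∀ v w : EuclideanSpace ℝ (Fin m),
      (∫ z, ⟪z - x, B.K x v⟫ * ⟪z - x, w⟫ ∂μ) = ⟪v, w⟫ := by
    intro v w
    have hq : Continuous fun z : EuclideanSpace ℝ (Fin m) => ⟪z - x, B.K x v⟫ :=
      (continuous_id.sub continuous_const).inner continuous_const
    have h1 : Integrable (fun z => ⟪w, z⟫ * ⟪z - x, B.K x v⟫) μ :=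
      bm_integrable hPc hcompl ((continuous_const.inner continuous_id).mul hq)
    have h2 : Integrable (fun z => ⟪w, x⟫ * ⟪z - x, B.K x v⟫) μ :=
      (bm_integrable hPc hcompl hq).const_mul _
    have hkey := key v w
    have hswap : (fun z => ⟪w, z⟫ * ⟪B.K x (z - x), v⟫)
        = fun z => ⟪w, z⟫ * ⟪z - x, B.K x v⟫ :=
      funext fun z => by rw [B.K_symm x hx]
    rw [hswap] at hkey
    have hexp : (fun z : EuclideanSpace ℝ (Fin m) => ⟪z - x, B.K x v⟫ * ⟪z - x, w⟫)
        = fun z => ⟪w, z⟫ * ⟪z - x, B.K x v⟫ - ⟪w, x⟫ * ⟪z - x, B.K x v⟫ := by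
      funext z
      have h3 : ⟪z - x, w⟫ = ⟪w, z⟫ - ⟪w, x⟫ := by
        rw [inner_sub_left, real_inner_comm z w, real_inner_comm x w]
      rw [h3]; ring
    rw [hexp, integral_sub h1 h2, hkey, integral_const_mul, step0 (B.K x v)]
    rw [real_inner_comm]; ring
  -- Left inverse identity: A(x) K(x) = Id
  have hleft : ∀ v, covMap μ x (B.K x v) = v := by
    intro v
    apply ext_inner_right ℝ
    intro w
    rw [stepB (B.K x v) w, stepA v w]
  -- Linear-map packaging to get the right inverse
  have hadd : ∀ u v, covMap μ x (u + v) = covMap μ x u + covMap μ x v := by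
    intro u v
    rw [covMap, covMap, covMap, ← integral_add (hFint u) (hFint v)]
    refine integral_congr_ae (Eventually.of_forall fun z => ?_)
    show ⟪z - x, u + v⟫ • (z - x) = ⟪z - x, u⟫ • (z - x) + ⟪z - x, v⟫ • (z - x)
    rw [inner_add_right, add_smul]
  have hsmulc : ∀ (c : ℝ) u, covMap μ x (c • u) = c • covMap μ x u := by
    intro c u
    rw [covMap, covMap, ← integral_smul]
    refine integral_congr_ae (Eventually.of_forall fun z => ?_)
    show ⟪z - x, c • u⟫ • (z - x) = c • (⟪z - x, u⟫ • (z - x))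
    rw [real_inner_smul_right, smul_smul]
  let Al : EuclideanSpace ℝ (Fin m) →ₗ[ℝ] EuclideanSpace ℝ (Fin m) :=
    { toFun := covMap μ x, map_add' := hadd, map_smul' := hsmulc }
  let Kl : EuclideanSpace ℝ (Fin m) →ₗ[ℝ] EuclideanSpace ℝ (Fin m) := (B.K x : _ →L[ℝ] _)
  have hAK : Al * Kl = 1 := LinearMap.ext fun v => hleft v
  have hKA : Kl * Al = 1 := mul_eq_one_comm.mp hAK
  have hright : ∀ v, B.K x (covMap μ x v) = v := fun v => LinearMap.ext_iff.mp hKA v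
  -- positive definiteness of A(x)
  have hpos : ∀ v, v ≠ 0 → 0 < ⟪covMap μ x v, v⟫ := by
    intro v hv
    have hqv : Continuous fun z : EuclideanSpace ℝ (Fin m) => ⟪z - x, v⟫ :=
      (continuous_id.sub continuous_const).inner continuous_const
    have hint2 : Integrable (fun z => ⟪z - x, v⟫ * ⟪z - x, v⟫) μ :=
      bm_integrable hPc hcompl (hqv.mul hqv)
    rw [stepB v v]
    rcases (integral_nonneg (μ := μ) (f := fun z => ⟪z - x, v⟫ * ⟪z - x, v⟫) fun z => mul_self_nonneg _).lt_or_eq with h | h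
    · exact h
    · exfalso
      have hz : (fun z => ⟪z - x, v⟫ * ⟪z - x, v⟫) =ᵐ[μ] 0 :=
        (integral_eq_zero_iff_of_nonneg_ae
          (Eventually.of_forall fun z => mul_self_nonneg _) hint2).mp h.symm
      have hcov0 : covMap μ x v = 0 := by
        apply ext_inner_right ℝ
        intro w
        rw [stepB v w, inner_zero_left]
        refine integral_eq_zero_of_ae ?_
        filter_upwards [hz] with z hz'
        have h0 : ⟪z - x, v⟫ = 0 := mul_self_eq_zero.mp hz'
        simp [h0]
      exact hv (by rw [← hright v, hcov0, map_zero])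
  -- positive definiteness of K(x)
  have hKpos : ∀ v, v ≠ 0 → 0 < ⟪B.K x v, v⟫ := by
    intro v hv
    have hKv : B.K x v ≠ 0 := by
      intro h
      apply hv
      have := hleft v
      rw [h] at this
      rw [← this, covMap]
      simp
    have h1 := hpos (B.K x v) hKv
    rw [hleft v] at h1
    rw [real_inner_comm] at h1
    exact h1
  exact ⟨hpos, fun v => ⟨hleft v, hright v⟩, hKpos⟩

end
end

section
/- Let B be a Bernstein measure on P with defining matrix K, and for u ∈ ℝ^m let D_u be the first-order operator D_u f(x) = ⟨A(x)∇f(x), u⟩ on smooth functions on P°, where A(x) = K(x)^{-1}. Then for all u, v ∈ ℝ^m the operators commute: D_u D_v f = D_v D_u f for every smooth function f on P°. -/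
/- Setting: `P ⊆ ℝ^m` is a compact convex polytope (convex hull of a finite set) with
nonempty interior.  `M(P)` is modelled by measures on `ℝ^m` that are probability measures
giving full mass to `P`; weak-* continuity of `x ↦ dB_x` is expressed by continuity of
`x ↦ ∫ f dB_x` for every `f` continuous on `P`. -/

open MeasureTheory Filter Set
open scoped RealInnerProductSpace ENNReal Topology

noncomputable section

/-- The first-order differential operator `D_u f(x) = ⟪A(x)∇f(x), u⟫`, where
`A(x) = K(x)⁻¹ = ∫ (z−x)⊗(z−x) dB_x(z)` is the covariance matrix. -/
def Dop {m : ℕ} (meas : EuclideanSpace ℝ (Fin m) → Measure (EuclideanSpace ℝ (Fin m)))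
    (u : EuclideanSpace ℝ (Fin m)) (f : EuclideanSpace ℝ (Fin m) → ℝ)
    (x : EuclideanSpace ℝ (Fin m)) : ℝ :=
  ⟪covMap (meas x) x (gradient f x), u⟫

namespace BMaux

variable {m : ℕ} {P : Set (EuclideanSpace ℝ (Fin m))} (B : BernsteinMeasure m P)

local notation "E" => EuclideanSpace ℝ (Fin m)

lemma bm_int (hPc : IsCompact P) {x : E} (hx : x ∈ P) {F : Type*} [NormedAddCommGroup F]
    {g : E → F} (hg : Continuous g) : Integrable g (B.meas x) := by
  haveI := B.isProb x hx
  have hres : (B.meas x).restrict P = B.meas x :=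
    Measure.restrict_eq_self_of_ae_mem
      (by rw [ae_iff]; simpa [Set.compl_def] using B.suppIn x hx)
  rw [← hres]
  exact ContinuousOn.integrableOn_compact hPc hg.continuousOn

lemma int_inner_bary (hPc : IsCompact P) {x : E} (hx : x ∈ P) (u : E) :
    ∫ z, ⟪z, u⟫ ∂(B.meas x) = ⟪x, u⟫ := by
  have h1 : (fun z : E => ⟪z, u⟫) = fun z => (innerSL ℝ u) z :=
    funext fun z => real_inner_comm _ _
  rw [h1, (innerSL ℝ u).integral_comp_comm (bm_int B hPc hx continuous_id'),
    B.bary x hx, innerSL_apply_apply, real_inner_comm]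

lemma int_inner_sub_bary (hPc : IsCompact P) {x : E} (hx : x ∈ P) (u : E) :
    ∫ z, ⟪z - x, u⟫ ∂(B.meas x) = 0 := by
  haveI := B.isProb x hx
  simp_rw [inner_sub_left]
  rw [integral_sub (bm_int B hPc hx (continuous_id'.inner continuous_const)) (integrable_const _),
    int_inner_bary B hPc hx, integral_const]
  simp

lemma cov_inner (hPc : IsCompact P) {x : E} (hx : x ∈ P) (u w : E) :
    ⟪covMap (B.meas x) x u, w⟫ = ∫ z, ⟪z - x, u⟫ * ⟪z - x, w⟫ ∂(B.meas x) := by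
  rw [covMap, real_inner_comm, ← integral_inner (bm_int B hPc hx (g := fun z : E => ⟪z - x, u⟫ • (z - x)) (by fun_prop)) w]
  congr 1; funext z
  rw [real_inner_smul_right, real_inner_comm w]

lemma cov_symm (hPc : IsCompact P) {x : E} (hx : x ∈ P) (u w : E) :
    ⟪covMap (B.meas x) x u, w⟫ = ⟪covMap (B.meas x) x w, u⟫ := by
  rw [cov_inner B hPc hx, cov_inner B hPc hx]
  congr 1; funext z; rw [mul_comm]

lemma int_smul_inner (hPc : IsCompact P) {x : E} (hx : x ∈ P) {q : E → ℝ}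
    (hq : Continuous q) (T : E →L[ℝ] E) (w : E) :
    ⟪∫ z, q z • T (z - x) ∂(B.meas x), w⟫ = ∫ z, q z * ⟪T (z - x), w⟫ ∂(B.meas x) := by
  have hint : Integrable (fun z : E => q z • T (z - x)) (B.meas x) :=
    bm_int B hPc hx (hq.smul (T.continuous.comp (continuous_id'.sub continuous_const)))
  rw [real_inner_comm, ← integral_inner hint w]
  congr 1; funext z
  rw [real_inner_smul_right, real_inner_comm w]

lemma hasFDerivAt_intB (hPc : IsCompact P) {x : E} (hx : x ∈ interior P) {q : E → ℝ}
    (hq : Continuous q) :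
    HasFDerivAt (fun y => ∫ z, q z ∂(B.meas y))
      (innerSL ℝ (∫ z, q z • (B.K x (z - x)) ∂(B.meas x))) x := by
  have hqC : ContinuousOn (fun z : E => ((q z : ℝ) : ℂ)) P :=
    (Complex.continuous_ofReal.comp hq).continuousOn
  have hGd : DifferentiableAt ℝ (fun y => ∫ z, ((q z : ℝ) : ℂ) ∂(B.meas y)) x :=
    ((B.smoothOn _ hqC).contDiffAt (isOpen_interior.mem_nhds hx)).differentiableAt (by simp)
  have hG := hGd.hasFDerivAt
  have hre : (fun y => ∫ z, q z ∂(B.meas y))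
      = fun y => Complex.reCLM ((fun y => ∫ z, ((q z : ℝ) : ℂ) ∂(B.meas y)) y) := by
    funext y
    show ∫ z, q z ∂(B.meas y) = Complex.reCLM (∫ z, ((q z : ℝ) : ℂ) ∂(B.meas y))
    rw [show (∫ z, ((q z : ℝ) : ℂ) ∂(B.meas y)) = ((∫ z, q z ∂(B.meas y) : ℝ) : ℂ) from
      integral_ofReal]
    simp
  rw [hre]
  have h2 := (Complex.reCLM.hasFDerivAt).comp x hG
  refine h2.congr_fderiv ?_
  apply ContinuousLinearMap.ext; intro w
  have hg := B.grad_eq _ hqC x hx w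
  simp only [ContinuousLinearMap.coe_comp', Function.comp_apply]
  rw [hg]
  simp_rw [← Complex.ofReal_mul]
  rw [show (∫ z, ((q z * ⟪B.K x (z - x), w⟫ : ℝ) : ℂ) ∂(B.meas x))
      = ((∫ z, q z * ⟪B.K x (z - x), w⟫ ∂(B.meas x) : ℝ) : ℂ) from integral_ofReal]
  rw [innerSL_apply_apply, int_smul_inner B hPc (interior_subset hx) hq (B.K x) w]
  simp

lemma K_cov (hPc : IsCompact P) {x : E} (hx : x ∈ interior P) (u : E) :
    B.K x (covMap (B.meas x) x u) = u := by
  have hxP := interior_subset hx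
  haveI := B.isProb x hxP
  have key1 : ∫ z, ⟪z - x, u⟫ • B.K x (z - x) ∂(B.meas x) = u := by
    have h1 := hasFDerivAt_intB B hPc hx (q := fun z => ⟪z, u⟫)
      (continuous_id'.inner continuous_const)
    have heq1 : (fun y => ∫ z, ⟪z, u⟫ ∂(B.meas y)) =ᶠ[𝓝 x] fun y => ⟪y, u⟫ :=
      eventually_of_mem (isOpen_interior.mem_nhds hx) fun y hy =>
        int_inner_bary B hPc (interior_subset hy) u
    have h1' := h1.congr_of_eventuallyEq heq1.symm
    have h0 : HasFDerivAt (fun y : E => ⟪y, u⟫) (innerSL ℝ u) x := by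
      have : (fun y : E => ⟪y, u⟫) = fun y => (innerSL ℝ u) y :=
        funext fun y => real_inner_comm _ _
      rw [this]; exact (innerSL ℝ u).hasFDerivAt
    have hm1 : (∫ z, ⟪z, u⟫ • B.K x (z - x) ∂(B.meas x)) = u := by
      refine ext_inner_right ℝ fun w => ?_
      have := congrArg (fun L : (EuclideanSpace ℝ (Fin m)) →L[ℝ] ℝ => L w) (h1'.unique h0)
      simpa using this
    have h1c := hasFDerivAt_intB B hPc hx (q := fun _ : E => ⟪x, u⟫) continuous_const
    have heqc : (fun y => ∫ _, ⟪x, u⟫ ∂(B.meas y)) =ᶠ[𝓝 x] fun _ => ⟪x, u⟫ :=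
      eventually_of_mem (isOpen_interior.mem_nhds hx) fun y hy => by
        haveI := B.isProb y (interior_subset hy)
        simp [integral_const]
    have h1c' := h1c.congr_of_eventuallyEq heqc.symm
    have h0c : HasFDerivAt (fun _ : E => ⟪x, u⟫) (0 : (EuclideanSpace ℝ (Fin m)) →L[ℝ] ℝ) x :=
      hasFDerivAt_const _ _
    have hm0 : (∫ z, ⟪x, u⟫ • B.K x (z - x) ∂(B.meas x)) = 0 := by
      refine ext_inner_right ℝ fun w => ?_
      have := congrArg (fun L : (EuclideanSpace ℝ (Fin m)) →L[ℝ] ℝ => L w) (h1c'.unique h0c)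
      simpa using this
    have hi1 : Integrable (fun z : E => ⟪z, u⟫ • B.K x (z - x)) (B.meas x) :=
      bm_int B hPc hxP (by fun_prop)
    have hi0 : Integrable (fun z : E => ⟪x, u⟫ • B.K x (z - x)) (B.meas x) :=
      bm_int B hPc hxP (by fun_prop)
    calc ∫ z, ⟪z - x, u⟫ • B.K x (z - x) ∂(B.meas x)
        = ∫ z, (⟪z, u⟫ • B.K x (z - x) - ⟪x, u⟫ • B.K x (z - x)) ∂(B.meas x) := by
          congr 1; funext z; rw [inner_sub_left, sub_smul]
      _ = u - 0 := by rw [integral_sub hi1 hi0, hm1, hm0]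
      _ = u := sub_zero u
  refine ext_inner_right ℝ fun w => ?_
  rw [B.K_symm x hx _ w, cov_inner B hPc hxP u (B.K x w)]
  have hsym : ∀ z : E, ⟪z - x, B.K x w⟫ = ⟪B.K x (z - x), w⟫ :=
    fun z => (B.K_symm x hx (z - x) w).symm
  simp_rw [hsym]
  rw [← int_smul_inner B hPc hxP (q := fun z => ⟪z - x, u⟫) ((continuous_id'.sub continuous_const).inner continuous_const)
    (B.K x) w, key1]

lemma int_coord {y : E} {g : E → E} (hg : Integrable g (B.meas y)) (j : Fin m) :
    (∫ z, g z ∂(B.meas y)) j = ∫ z, g z j ∂(B.meas y) := by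
  have := (EuclideanSpace.proj j (𝕜 := ℝ)).integral_comp_comm hg
  simpa using this.symm

lemma cov_expand (hPc : IsCompact P) {y : E} (hy : y ∈ P) (v : E) :
    covMap (B.meas y) y v = (∫ z, ⟪z, v⟫ • z ∂(B.meas y)) - ⟪y, v⟫ • y := by
  haveI := B.isProb y hy
  have h1 : Integrable (fun z : E => ⟪z, v⟫ • z) (B.meas y) :=
    bm_int B hPc hy (by fun_prop)
  have h2 : Integrable (fun z : E => ⟪z, v⟫ • y) (B.meas y) :=
    bm_int B hPc hy (by fun_prop)
  have h3 : Integrable (fun z : E => ⟪y, v⟫ • z) (B.meas y) :=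
    bm_int B hPc hy (by fun_prop)
  have h4 : Integrable (fun _ : E => ⟪y, v⟫ • y) (B.meas y) := integrable_const _
  rw [covMap]
  have hpt : (fun z : E => ⟪z - y, v⟫ • (z - y))
      = fun z => ((⟪z, v⟫ • z - ⟪z, v⟫ • y) - (⟪y, v⟫ • z - ⟪y, v⟫ • y)) := by
    funext z
    rw [inner_sub_left, sub_smul, smul_sub, smul_sub]
  have h12 : Integrable (fun z : E => ⟪z, v⟫ • z - ⟪z, v⟫ • y) (B.meas y) := h1.sub h2
  have h34 : Integrable (fun z : E => ⟪y, v⟫ • z - ⟪y, v⟫ • y) (B.meas y) := h3.sub h4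
  rw [hpt, integral_sub h12 h34, integral_sub h1 h2, integral_sub h3 h4,
    integral_smul_const, int_inner_bary B hPc hy v, integral_smul, B.bary y hy, integral_const]
  simp only [measure_univ, ENNReal.toReal_one, one_smul, probReal_univ]
  abel

lemma cov_vec_eq (hPc : IsCompact P) {y : E} (hy : y ∈ P) (v : E) :
    (∫ z, ⟪z, v⟫ • z ∂(B.meas y))
      = ∑ i, (∫ z, ⟪z, v⟫ * z i ∂(B.meas y)) • EuclideanSpace.single i (1 : ℝ) := by
  have h1 : Integrable (fun z : E => ⟪z, v⟫ • z) (B.meas y) :=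
    bm_int B hPc hy (by fun_prop)
  ext j
  rw [int_coord B h1 j, WithLp.ofLp_sum, Finset.sum_apply]
  simp only [PiLp.smul_apply, smul_eq_mul, EuclideanSpace.single_apply, mul_ite, mul_one,
    mul_zero, Finset.sum_ite_eq, Finset.mem_univ, if_true]

lemma hasFDerivAt_cov (hPc : IsCompact P) {x : E} (hx : x ∈ interior P) (v : E) :
    HasFDerivAt (fun y => covMap (B.meas y) y v)
      ((∑ i, (innerSL ℝ (∫ z, (⟪z, v⟫ * z i) • B.K x (z - x) ∂(B.meas x))).smulRight
          (EuclideanSpace.single i (1 : ℝ)))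
        - ((innerSL ℝ v x) • ContinuousLinearMap.id ℝ (EuclideanSpace ℝ (Fin m))
            + (innerSL ℝ v).smulRight x)) x := by
  have hC : HasFDerivAt
      (fun y => ∑ i, (∫ z, ⟪z, v⟫ * z i ∂(B.meas y)) • EuclideanSpace.single i (1 : ℝ))
      (∑ i, (innerSL ℝ (∫ z, (⟪z, v⟫ * z i) • B.K x (z - x) ∂(B.meas x))).smulRight
          (EuclideanSpace.single i (1 : ℝ))) x :=
    HasFDerivAt.fun_sum fun i _ =>
      (hasFDerivAt_intB B hPc hx (q := fun z => ⟪z, v⟫ * z i)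
        (by fun_prop)).smul_const _
  have hS : HasFDerivAt (fun y : E => ⟪y, v⟫ • y)
      ((innerSL ℝ v x) • ContinuousLinearMap.id ℝ (EuclideanSpace ℝ (Fin m))
        + (innerSL ℝ v).smulRight x) x := by
    have h : (fun y : E => ⟪y, v⟫ • y) = fun y => (innerSL ℝ v y) • y := by
      funext y; rw [innerSL_apply_apply, real_inner_comm]
    rw [h]
    exact ((innerSL ℝ v).hasFDerivAt).smul (hasFDerivAt_id x)
  refine (hC.sub hS).congr_of_eventuallyEq ?_
  refine eventually_of_mem (isOpen_interior.mem_nhds hx) fun y hy => ?_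
  show covMap (B.meas y) y v
      = (∑ i, (∫ z, ⟪z, v⟫ * z i ∂(B.meas y)) • EuclideanSpace.single i (1 : ℝ)) - ⟪y, v⟫ • y
  rw [cov_expand B hPc (interior_subset hy) v, cov_vec_eq B hPc (interior_subset hy) v]

lemma eval_coord (hPc : IsCompact P) {x : E} (hx : x ∈ interior P) (u v : E) (j : Fin m) :
    ⟪∫ z, (⟪z, v⟫ * z j) • B.K x (z - x) ∂(B.meas x), covMap (B.meas x) x u⟫
      - (⟪v, x⟫ * (covMap (B.meas x) x u) j + ⟪v, covMap (B.meas x) x u⟫ * x j)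
    = ∫ z, (⟪z - x, u⟫ * ⟪z - x, v⟫) * z j ∂(B.meas x)
      - (∫ z, ⟪z - x, u⟫ * ⟪z - x, v⟫ ∂(B.meas x)) * x j := by
  have hxP := interior_subset hx
  have hcu : Continuous fun z : E => ⟪z - x, u⟫ :=
    (continuous_id'.sub continuous_const).inner continuous_const
  have hcv : Continuous fun z : E => ⟪z - x, v⟫ :=
    (continuous_id'.sub continuous_const).inner continuous_const
  have hKau : B.K x (covMap (B.meas x) x u) = u := K_cov B hPc hx u
  have h1 : ⟪∫ z, (⟪z, v⟫ * z j) • B.K x (z - x) ∂(B.meas x), covMap (B.meas x) x u⟫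
      = ∫ z, (⟪z, v⟫ * z j) * ⟪z - x, u⟫ ∂(B.meas x) := by
    rw [int_smul_inner B hPc hxP (q := fun z => ⟪z, v⟫ * z j)
      (by fun_prop) (B.K x)
      (covMap (B.meas x) x u)]
    congr 1; funext z
    rw [B.K_symm x hx (z - x) (covMap (B.meas x) x u), hKau]
  have h2 : ∫ z, ⟪z - x, u⟫ * z j ∂(B.meas x) = (covMap (B.meas x) x u) j := by
    have hic : Integrable (fun z : E => ⟪z - x, u⟫ • (z - x)) (B.meas x) :=
      bm_int B hPc hxP (by fun_prop)
    rw [covMap, int_coord B hic j]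
    have hi1 : Integrable (fun z : E => ⟪z - x, u⟫ * z j) (B.meas x) :=
      bm_int B hPc hxP (by fun_prop)
    have hi2 : Integrable (fun z : E => ⟪z - x, u⟫ * x j) (B.meas x) :=
      bm_int B hPc hxP (by fun_prop)
    have hpt : (fun z : E => (⟪z - x, u⟫ • (z - x)) j)
        = fun z : E => ⟪z - x, u⟫ * z j - ⟪z - x, u⟫ * x j := by
      funext z
      simp only [PiLp.smul_apply, PiLp.sub_apply, smul_eq_mul]
      ring
    rw [hpt, integral_sub hi1 hi2, integral_mul_const, int_inner_sub_bary B hPc hxP u]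
    simp
  have h3 : ⟪v, covMap (B.meas x) x u⟫ = ∫ z, ⟪z - x, u⟫ * ⟪z - x, v⟫ ∂(B.meas x) := by
    rw [real_inner_comm]; exact cov_inner B hPc hxP u v
  have hi1 : Integrable (fun z : E => (⟪z - x, u⟫ * ⟪z - x, v⟫) * z j) (B.meas x) :=
    bm_int B hPc hxP (by fun_prop)
  have hi2 : Integrable (fun z : E => ⟪x, v⟫ * (⟪z - x, u⟫ * z j)) (B.meas x) :=
    bm_int B hPc hxP (by fun_prop)
  have hsplit : ∫ z, (⟪z, v⟫ * z j) * ⟪z - x, u⟫ ∂(B.meas x)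
      = ∫ z, (⟪z - x, u⟫ * ⟪z - x, v⟫) * z j ∂(B.meas x)
        + ⟪x, v⟫ * ∫ z, ⟪z - x, u⟫ * z j ∂(B.meas x) := by
    rw [← integral_const_mul, ← integral_add hi1 hi2]
    congr 1; funext z
    have hz : ⟪z, v⟫ = ⟪z - x, v⟫ + ⟪x, v⟫ := by
      rw [inner_sub_left]; ring
    rw [hz]; ring
  rw [h1, hsplit, h2, h3, real_inner_comm v x]
  ring

lemma eval_symm (hPc : IsCompact P) {x : E} (hx : x ∈ interior P) (u v : E) :
    ((∑ i, (innerSL ℝ (∫ z, (⟪z, v⟫ * z i) • B.K x (z - x) ∂(B.meas x))).smulRight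
          (EuclideanSpace.single i (1 : ℝ)))
        - ((innerSL ℝ v x) • ContinuousLinearMap.id ℝ (EuclideanSpace ℝ (Fin m))
            + (innerSL ℝ v).smulRight x)) (covMap (B.meas x) x u)
    = ((∑ i, (innerSL ℝ (∫ z, (⟪z, u⟫ * z i) • B.K x (z - x) ∂(B.meas x))).smulRight
          (EuclideanSpace.single i (1 : ℝ)))
        - ((innerSL ℝ u x) • ContinuousLinearMap.id ℝ (EuclideanSpace ℝ (Fin m))
            + (innerSL ℝ u).smulRight x)) (covMap (B.meas x) x v) := by
  ext j
  simp only [ContinuousLinearMap.sub_apply, ContinuousLinearMap.add_apply,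
    ContinuousLinearMap.sum_apply, ContinuousLinearMap.smulRight_apply,
    ContinuousLinearMap.smul_apply, ContinuousLinearMap.id_apply, innerSL_apply_apply,
    PiLp.sub_apply, PiLp.add_apply, PiLp.smul_apply, smul_eq_mul]
  rw [WithLp.ofLp_sum, WithLp.ofLp_sum, Finset.sum_apply, Finset.sum_apply]
  simp only [PiLp.smul_apply, smul_eq_mul, EuclideanSpace.single_apply, mul_ite, mul_one,
    mul_zero, Finset.sum_ite_eq, Finset.mem_univ, if_true]
  have hL := eval_coord B hPc hx u v j
  have hR := eval_coord B hPc hx v u j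
  have e1 : ∫ z, (⟪z - x, v⟫ * ⟪z - x, u⟫) * z j ∂(B.meas x)
      = ∫ z, (⟪z - x, u⟫ * ⟪z - x, v⟫) * z j ∂(B.meas x) := by
    congr 1; funext z; ring
  have e2 : ∫ z, ⟪z - x, v⟫ * ⟪z - x, u⟫ ∂(B.meas x)
      = ∫ z, ⟪z - x, u⟫ * ⟪z - x, v⟫ ∂(B.meas x) := by
    congr 1; funext z; ring
  rw [e1, e2] at hR
  rw [hL, hR]

lemma dop_eq (hPc : IsCompact P) {y : E} (hy : y ∈ P) (w : E) (g : E → ℝ) :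
    Dop B.meas w g y = fderiv ℝ g y (covMap (B.meas y) y w) := by
  have hgrad : ∀ e : E, ⟪gradient g y, e⟫ = fderiv ℝ g y e := fun e => by
    rw [gradient, InnerProductSpace.toDual_symm_apply]
  rw [show Dop B.meas w g y = ⟪covMap (B.meas y) y (gradient g y), w⟫ from rfl,
    cov_symm B hPc hy (gradient g y) w, real_inner_comm, hgrad]

/-- The derivative of the covariance vector field `y ↦ A(y)v` at `x`. -/
def derivCLM (x v : E) : (EuclideanSpace ℝ (Fin m)) →L[ℝ] (EuclideanSpace ℝ (Fin m)) :=
  (∑ i, (innerSL ℝ (∫ z, (⟪z, v⟫ * z i) • B.K x (z - x) ∂(B.meas x))).smulRight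
      (EuclideanSpace.single i (1 : ℝ)))
    - ((innerSL ℝ v x) • ContinuousLinearMap.id ℝ (EuclideanSpace ℝ (Fin m))
        + (innerSL ℝ v).smulRight x)

lemma hasFDerivAt_cov' (hPc : IsCompact P) {x : E} (hx : x ∈ interior P) (v : E) :
    HasFDerivAt (fun y => covMap (B.meas y) y v) (derivCLM B x v) x :=
  hasFDerivAt_cov B hPc hx v

lemma eval_symm' (hPc : IsCompact P) {x : E} (hx : x ∈ interior P) (u v : E) :
    derivCLM B x v (covMap (B.meas x) x u) = derivCLM B x u (covMap (B.meas x) x v) :=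
  eval_symm B hPc hx u v

end BMaux

/-- For a Bernstein measure `B` on `P`, the operators `D_u` commute:
`D_u D_v f = D_v D_u f` on `P°` for every smooth `f` on `P°` and all `u, v ∈ ℝ^m`. -/


theorem Dop_comm
    {m : ℕ} (P : Set (EuclideanSpace ℝ (Fin m)))
    (hP : ∃ V : Finset (EuclideanSpace ℝ (Fin m)),
      P = convexHull ℝ (V : Set (EuclideanSpace ℝ (Fin m))))
    (hPo : (interior P).Nonempty)
    (B : BernsteinMeasure m P)
    (u v : EuclideanSpace ℝ (Fin m))
    (f : EuclideanSpace ℝ (Fin m) → ℝ) (hf : ContDiffOn ℝ (⊤ : ℕ∞) f (interior P)) :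
    ∀ x ∈ interior P, Dop B.meas u (Dop B.meas v f) x = Dop B.meas v (Dop B.meas u f) x := by
  obtain ⟨V, hV⟩ := hP
  have hPc : IsCompact P := by rw [hV]; exact V.finite_toSet.isCompact_convexHull ℝ
  intro x hx
  have hxP : x ∈ P := interior_subset hx
  have hfx : ContDiffAt ℝ (⊤ : ℕ∞) f x := hf.contDiffAt (isOpen_interior.mem_nhds hx)
  have hf2 : HasFDerivAt (fderiv ℝ f) (fderiv ℝ (fderiv ℝ f) x) x :=
    ((hfx.fderiv_right (m := 1) (WithTop.coe_le_coe.mpr le_top)).differentiableAt one_ne_zero).hasFDerivAt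
  have hfd : ∀ᶠ y in 𝓝 x, HasFDerivAt f (fderiv ℝ f y) y :=
    eventually_of_mem (isOpen_interior.mem_nhds hx) fun y hy =>
      ((hf.contDiffAt (isOpen_interior.mem_nhds hy)).differentiableAt (by simp)).hasFDerivAt
  have hsym2 := second_derivative_symmetric_of_eventually hfd hf2
  have key : ∀ a b : EuclideanSpace ℝ (Fin m),
      Dop B.meas a (Dop B.meas b f) x
        = fderiv ℝ f x (BMaux.derivCLM B x b (covMap (B.meas x) x a))
          + fderiv ℝ (fderiv ℝ f) x (covMap (B.meas x) x a) (covMap (B.meas x) x b) := by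
    intro a b
    have hFev : (Dop B.meas b f) =ᶠ[𝓝 x] fun y => fderiv ℝ f y (covMap (B.meas y) y b) :=
      eventually_of_mem (isOpen_interior.mem_nhds hx) fun y hy =>
        BMaux.dop_eq B hPc (interior_subset hy) b f
    have hFdAt : HasFDerivAt (fun y => fderiv ℝ f y (covMap (B.meas y) y b))
        ((fderiv ℝ f x).comp (BMaux.derivCLM B x b)
          + (fderiv ℝ (fderiv ℝ f) x).flip (covMap (B.meas x) x b)) x :=
      hf2.clm_apply (BMaux.hasFDerivAt_cov' B hPc hx b)
    have hF : HasFDerivAt (Dop B.meas b f)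
        ((fderiv ℝ f x).comp (BMaux.derivCLM B x b)
          + (fderiv ℝ (fderiv ℝ f) x).flip (covMap (B.meas x) x b)) x :=
      hFdAt.congr_of_eventuallyEq hFev
    rw [BMaux.dop_eq B hPc hxP a (Dop B.meas b f), hF.fderiv]
    simp [ContinuousLinearMap.flip_apply]
  rw [key u v, key v u, BMaux.eval_symm' B hPc hx u v,
    hsym2 (covMap (B.meas x) x u) (covMap (B.meas x) x v)]

end
end

section
/- Let B be a Bernstein measure on P with defining matrix K : P° → Sym(m,ℝ). Then the directional derivatives of K are symmetric: for all u, v ∈ ℝ^m and all x ∈ P°, [∇K(x)u]v = [∇K(x)v]u, where [∇K(x)v]u := (d/dt)|_{t=0} K(x+tv)u. -/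
/- Setting: `P ⊆ ℝ^m` is a compact convex polytope (convex hull of a finite set) with
nonempty interior.  `M(P)` is modelled by measures on `ℝ^m` that are probability measures
giving full mass to `P`; weak-* continuity of `x ↦ dB_x` is expressed by continuity of
`x ↦ ∫ f dB_x` for every `f` continuous on `P`. -/

open MeasureTheory Filter Set
open scoped RealInnerProductSpace ENNReal Topology

noncomputable section

variable {m : ℕ} {P : Set (EuclideanSpace ℝ (Fin m))}

lemma bm_integral_ofReal {α : Type*} {mα : MeasurableSpace α} {μ : Measure α} (f : α → ℝ) :
    ∫ x, ((f x : ℝ) : ℂ) ∂μ = ((∫ x, f x ∂μ : ℝ) : ℂ) :=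
  Complex.ofRealLI.integral_comp_comm f

lemma bm_integrable_s6 (hPc : IsCompact P) (B : BernsteinMeasure m P)
    {F : Type*} [NormedAddCommGroup F] {g : EuclideanSpace ℝ (Fin m) → F}
    (hg : Continuous g) {y : EuclideanSpace ℝ (Fin m)} (hy : y ∈ P) :
    Integrable g (B.meas y) := by
  haveI := B.isProb y hy
  obtain ⟨C, hC⟩ := hPc.exists_bound_of_continuousOn hg.continuousOn
  refine Integrable.mono' (integrable_const C) hg.aestronglyMeasurable ?_
  have hae : ∀ᵐ z ∂(B.meas y), z ∈ P := by
    rw [ae_iff]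
    have h2 : {z | ¬ z ∈ P} = Pᶜ := rfl
    rw [h2]; exact B.suppIn y hy
  filter_upwards [hae] with z hz using hC z hz

lemma bm_moment1 (hPc : IsCompact P) (B : BernsteinMeasure m P)
    {y : EuclideanSpace ℝ (Fin m)} (hy : y ∈ P) :
    ∫ z, (z - y) ∂B.meas y = 0 := by
  haveI := B.isProb y hy
  rw [integral_sub (bm_integrable_s6 hPc B (g := fun z => z) continuous_id hy) (integrable_const y)]
  simp [B.bary y hy]

lemma bm_inner_moment (hPc : IsCompact P) (B : BernsteinMeasure m P)
    {y : EuclideanSpace ℝ (Fin m)} (hy : y ∈ P) (c : EuclideanSpace ℝ (Fin m)) :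
    ∫ z, ⟪c, z - y⟫ ∂B.meas y = 0 := by
  rw [integral_inner (bm_integrable_s6 hPc B (g := fun z => z - y)
    (continuous_id.sub continuous_const) hy) c,
    bm_moment1 hPc B hy, inner_zero_right]

lemma bm_inner_bary (hPc : IsCompact P) (B : BernsteinMeasure m P)
    {y : EuclideanSpace ℝ (Fin m)} (hy : y ∈ P) (a : EuclideanSpace ℝ (Fin m)) :
    ∫ z, ⟪a, z⟫ ∂B.meas y = ⟪a, y⟫ := by
  rw [integral_inner (bm_integrable_s6 hPc B (g := fun z => z) continuous_id hy) a, B.bary y hy]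

lemma bm_gradR (B : BernsteinMeasure m P) {f : EuclideanSpace ℝ (Fin m) → ℝ}
    (hf : Continuous f) {x : EuclideanSpace ℝ (Fin m)} (hx : x ∈ interior P) :
    DifferentiableAt ℝ (fun y => ∫ z, f z ∂B.meas y) x ∧
      ∀ v, fderiv ℝ (fun y => ∫ z, f z ∂B.meas y) x v
        = ∫ z, f z * ⟪B.K x (z - x), v⟫ ∂B.meas x := by
  have hfc : ContinuousOn (fun z => ((f z : ℝ) : ℂ)) P :=
    (Complex.continuous_ofReal.comp hf).continuousOn
  have hFc : DifferentiableAt ℝ (fun y => ∫ z, ((f z : ℝ) : ℂ) ∂B.meas y) x :=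
    ((B.smoothOn _ hfc).differentiableOn (by simp)).differentiableAt
      (isOpen_interior.mem_nhds hx)
  have hkey : (fun y => ∫ z, f z ∂B.meas y)
      = fun y => Complex.reCLM (∫ z, ((f z : ℝ) : ℂ) ∂B.meas y) := by
    funext y; rw [bm_integral_ofReal]; simp
  have hdiff : DifferentiableAt ℝ (fun y => ∫ z, f z ∂B.meas y) x := by
    rw [hkey]; exact Complex.reCLM.differentiableAt.comp x hFc
  refine ⟨hdiff, fun v => ?_⟩
  have h1 : fderiv ℝ (fun y => ∫ z, f z ∂B.meas y) x
      = Complex.reCLM.comp (fderiv ℝ (fun y => ∫ z, ((f z : ℝ) : ℂ) ∂B.meas y) x) := by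
    rw [hkey]
    exact (Complex.reCLM.hasFDerivAt.comp x hFc.hasFDerivAt).fderiv
  rw [h1]
  simp only [ContinuousLinearMap.coe_comp', Function.comp_apply]
  rw [B.grad_eq _ hfc x hx v]
  have h2 : ∫ z, ((f z : ℝ) : ℂ) * ((⟪B.K x (z - x), v⟫ : ℝ) : ℂ) ∂B.meas x
      = ((∫ z, f z * ⟪B.K x (z - x), v⟫ ∂B.meas x : ℝ) : ℂ) := by
    rw [← bm_integral_ofReal]; norm_cast
  rw [h2]; simp

lemma bm_L2 (hPc : IsCompact P) (B : BernsteinMeasure m P)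
    {x : EuclideanSpace ℝ (Fin m)} (hx : x ∈ interior P)
    (a w : EuclideanSpace ℝ (Fin m)) :
    ∫ z, ⟪a, z - x⟫ * ⟪B.K x (z - x), w⟫ ∂B.meas x = ⟪a, w⟫ := by
  have hxP : x ∈ P := interior_subset hx
  haveI := B.isProb x hxP
  have hQc : Continuous (fun z : EuclideanSpace ℝ (Fin m) => ⟪B.K x (z - x), w⟫) :=
    ((B.K x).continuous.comp (continuous_id.sub continuous_const)).inner continuous_const
  have hQ0 : ∫ z, ⟪B.K x (z - x), w⟫ ∂B.meas x = 0 := by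
    have h1 : (fun z : EuclideanSpace ℝ (Fin m) => ⟪B.K x (z - x), w⟫)
        = fun z => ⟪B.K x w, z - x⟫ := by
      funext z
      rw [B.K_symm x hx, real_inner_comm]
    rw [h1, bm_inner_moment hPc B hxP]
  obtain ⟨hdiff, hfd⟩ := bm_gradR B (f := fun z => ⟪a, z⟫)
    (continuous_const.inner continuous_id) hx
  have hev : (fun y => ∫ z, ⟪a, z⟫ ∂B.meas y) =ᶠ[𝓝 x] fun y => ⟪a, y⟫ := by
    filter_upwards [isOpen_interior.mem_nhds hx] with y hy
    exact bm_inner_bary hPc B (interior_subset hy) a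
  have hfd2 : fderiv ℝ (fun y => ∫ z, ⟪a, z⟫ ∂B.meas y) x w = ⟪a, w⟫ := by
    rw [hev.fderiv_eq]
    have h2 : (fun y : EuclideanSpace ℝ (Fin m) => ⟪a, y⟫) = ⇑(innerSL ℝ a) := rfl
    rw [h2, (innerSL ℝ a).fderiv]
    simp
  have hR := hfd w
  rw [hfd2] at hR
  have hsplit : ∫ z, ⟪a, z⟫ * ⟪B.K x (z - x), w⟫ ∂B.meas x
      = (∫ z, ⟪a, z - x⟫ * ⟪B.K x (z - x), w⟫ ∂B.meas x)
        + ⟪a, x⟫ * ∫ z, ⟪B.K x (z - x), w⟫ ∂B.meas x := by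
    rw [← integral_const_mul, ← integral_add]
    · congr 1; funext z
      simp only [inner_sub_right]
      ring
    · exact bm_integrable_s6 hPc B
        (((continuous_const.inner (continuous_id.sub continuous_const))).mul hQc) hxP
    · exact bm_integrable_s6 hPc B (continuous_const.mul hQc) hxP
  rw [hsplit, hQ0, mul_zero, add_zero] at hR
  exact hR.symm

lemma bm_covK (hPc : IsCompact P) (B : BernsteinMeasure m P)
    {x : EuclideanSpace ℝ (Fin m)} (hx : x ∈ interior P)
    (b : EuclideanSpace ℝ (Fin m)) :
    covMap (B.meas x) x (B.K x b) = b := by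
  have hxP : x ∈ P := interior_subset hx
  apply ext_inner_left ℝ
  intro w
  rw [covMap, ← integral_inner (bm_integrable_s6 hPc B
    (g := fun z => (⟪z - x, B.K x b⟫ : ℝ) • (z - x))
    (by fun_prop) hxP) w]
  have h1 : ∀ z : EuclideanSpace ℝ (Fin m),
      ⟪w, (⟪z - x, B.K x b⟫ : ℝ) • (z - x)⟫ = ⟪w, z - x⟫ * ⟪B.K x (z - x), b⟫ := by
    intro z
    rw [real_inner_smul_right]
    have h2 : ⟪z - x, B.K x b⟫ = ⟪B.K x (z - x), b⟫ := (B.K_symm x hx (z - x) b).symm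
    rw [h2]; ring
  calc ∫ z, ⟪w, (⟪z - x, B.K x b⟫ : ℝ) • (z - x)⟫ ∂B.meas x
      = ∫ z, ⟪w, z - x⟫ * ⟪B.K x (z - x), b⟫ ∂B.meas x := by
        congr 1; funext z; exact h1 z
    _ = ⟪w, b⟫ := bm_L2 hPc B hx w b


lemma bm_Q0 (hPc : IsCompact P) (B : BernsteinMeasure m P)
    {x : EuclideanSpace ℝ (Fin m)} (hx : x ∈ interior P) (w : EuclideanSpace ℝ (Fin m)) :
    ∫ z, ⟪B.K x (z - x), w⟫ ∂B.meas x = 0 := by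
  have h1 : (fun z : EuclideanSpace ℝ (Fin m) => ⟪B.K x (z - x), w⟫)
      = fun z => ⟪B.K x w, z - x⟫ := by
    funext z; rw [B.K_symm x hx, real_inner_comm]
  rw [h1, bm_inner_moment hPc B (interior_subset hx)]

lemma bm_phi (hPc : IsCompact P) (B : BernsteinMeasure m P)
    {x : EuclideanSpace ℝ (Fin m)} (hx : x ∈ interior P)
    (a b : EuclideanSpace ℝ (Fin m)) :
    DifferentiableAt ℝ (fun y => ∫ z, ⟪a, z - y⟫ * ⟪b, z - y⟫ ∂B.meas y) x ∧
    ∀ u, fderiv ℝ (fun y => ∫ z, ⟪a, z - y⟫ * ⟪b, z - y⟫ ∂B.meas y) x u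
      = ∫ z, ⟪a, z - x⟫ * ⟪b, z - x⟫ * ⟪B.K x (z - x), u⟫ ∂B.meas x := by
  have hxP : x ∈ P := interior_subset hx
  haveI := B.isProb x hxP
  obtain ⟨hFr, hFr'⟩ := bm_gradR B (f := fun z => ⟪a, z⟫ * ⟪b, z⟫)
    ((continuous_const.inner continuous_id).mul (continuous_const.inner continuous_id)) hx
  have hq : HasFDerivAt (fun y : EuclideanSpace ℝ (Fin m) => ⟪a, y⟫ * ⟪b, y⟫)
      ((⟪a, x⟫ : ℝ) • (innerSL ℝ b) + (⟪b, x⟫ : ℝ) • (innerSL ℝ a)) x :=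
    HasFDerivAt.mul ((innerSL ℝ a).hasFDerivAt) ((innerSL ℝ b).hasFDerivAt)
  have hqd : DifferentiableAt ℝ (fun y : EuclideanSpace ℝ (Fin m) => ⟪a, y⟫ * ⟪b, y⟫) x :=
    hq.differentiableAt
  have hev : (fun y => ∫ z, ⟪a, z - y⟫ * ⟪b, z - y⟫ ∂B.meas y)
      =ᶠ[𝓝 x] fun y => (∫ z, ⟪a, z⟫ * ⟪b, z⟫ ∂B.meas y) - ⟪a, y⟫ * ⟪b, y⟫ := by
    filter_upwards [isOpen_interior.mem_nhds hx] with y hy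
    have hyP : y ∈ P := interior_subset hy
    haveI := B.isProb y hyP
    have int0 : Integrable (fun z : EuclideanSpace ℝ (Fin m) => ⟪a, z⟫ * ⟪b, z⟫) (B.meas y) :=
      bm_integrable_s6 hPc B
        ((continuous_const.inner continuous_id).mul (continuous_const.inner continuous_id)) hyP
    have int1 : Integrable (fun z : EuclideanSpace ℝ (Fin m) => ⟪a, y⟫ * ⟪b, z⟫) (B.meas y) :=
      bm_integrable_s6 hPc B (continuous_const.mul (continuous_const.inner continuous_id)) hyP
    have int2 : Integrable (fun z : EuclideanSpace ℝ (Fin m) => ⟪b, y⟫ * ⟪a, z⟫) (B.meas y) :=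
      bm_integrable_s6 hPc B (continuous_const.mul (continuous_const.inner continuous_id)) hyP
    have expand : (fun z : EuclideanSpace ℝ (Fin m) => ⟪a, z - y⟫ * ⟪b, z - y⟫)
        = fun z => ⟪a, z⟫ * ⟪b, z⟫
            - (⟪a, y⟫ * ⟪b, z⟫ + ⟪b, y⟫ * ⟪a, z⟫ - ⟪a, y⟫ * ⟪b, y⟫) := by
      funext z; simp only [inner_sub_right]; ring
    have int12 : Integrable (fun z : EuclideanSpace ℝ (Fin m) =>
        ⟪a, y⟫ * ⟪b, z⟫ + ⟪b, y⟫ * ⟪a, z⟫) (B.meas y) := int1.add int2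
    have int12c : Integrable (fun z : EuclideanSpace ℝ (Fin m) =>
        ⟪a, y⟫ * ⟪b, z⟫ + ⟪b, y⟫ * ⟪a, z⟫ - ⟪a, y⟫ * ⟪b, y⟫) (B.meas y) :=
      int12.sub (integrable_const _)
    have h2 : ∫ z, (⟪a, y⟫ * ⟪b, z⟫ + ⟪b, y⟫ * ⟪a, z⟫ - ⟪a, y⟫ * ⟪b, y⟫) ∂B.meas y
        = ⟪a, y⟫ * ⟪b, y⟫ := by
      rw [integral_sub int12 (integrable_const _), integral_add int1 int2,
        integral_const_mul, integral_const_mul, bm_inner_bary hPc B hyP a,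
        bm_inner_bary hPc B hyP b, integral_const]
      simp only [Measure.real, measure_univ, ENNReal.toReal_one, one_smul, smul_eq_mul]
      ring
    rw [expand, integral_sub int0 int12c, h2]
  refine ⟨hev.differentiableAt_iff.mpr (hFr.sub hqd), fun u => ?_⟩
  have hsub : fderiv ℝ (fun y => (∫ z, ⟪a, z⟫ * ⟪b, z⟫ ∂B.meas y) - ⟪a, y⟫ * ⟪b, y⟫) x u
      = fderiv ℝ (fun y => ∫ z, ⟪a, z⟫ * ⟪b, z⟫ ∂B.meas y) x u
        - fderiv ℝ (fun y => ⟪a, y⟫ * ⟪b, y⟫) x u := by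
    rw [fderiv_fun_sub hFr hqd]; rfl
  rw [hev.fderiv_eq, hsub, hFr' u, hq.fderiv]
  simp only [ContinuousLinearMap.add_apply, ContinuousLinearMap.coe_smul', Pi.smul_apply,
    innerSL_apply_apply, smul_eq_mul]
  have hKc : Continuous (fun z : EuclideanSpace ℝ (Fin m) => ⟪B.K x (z - x), u⟫) :=
    ((B.K x).continuous.comp (continuous_id.sub continuous_const)).inner continuous_const
  have hia : Continuous (fun z : EuclideanSpace ℝ (Fin m) => ⟪a, z - x⟫) :=
    continuous_const.inner (continuous_id.sub continuous_const)
  have hib : Continuous (fun z : EuclideanSpace ℝ (Fin m) => ⟪b, z - x⟫) :=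
    continuous_const.inner (continuous_id.sub continuous_const)
  have hI1 : Integrable (fun z => ⟪a, z - x⟫ * ⟪b, z - x⟫ * ⟪B.K x (z - x), u⟫) (B.meas x) :=
    bm_integrable_s6 hPc B ((hia.mul hib).mul hKc) hxP
  have hI2 : Integrable (fun z => ⟪a, x⟫ * (⟪b, z - x⟫ * ⟪B.K x (z - x), u⟫)) (B.meas x) :=
    bm_integrable_s6 hPc B (continuous_const.mul (hib.mul hKc)) hxP
  have hI3 : Integrable (fun z => ⟪b, x⟫ * (⟪a, z - x⟫ * ⟪B.K x (z - x), u⟫)) (B.meas x) :=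
    bm_integrable_s6 hPc B (continuous_const.mul (hia.mul hKc)) hxP
  have hI4 : Integrable (fun z => (⟪a, x⟫ * ⟪b, x⟫) * ⟪B.K x (z - x), u⟫) (B.meas x) :=
    bm_integrable_s6 hPc B (continuous_const.mul hKc) hxP
  have hE : (fun z : EuclideanSpace ℝ (Fin m) => (⟪a, z⟫ * ⟪b, z⟫) * ⟪B.K x (z - x), u⟫)
      = fun z => ⟪a, z - x⟫ * ⟪b, z - x⟫ * ⟪B.K x (z - x), u⟫
          + (⟪a, x⟫ * (⟪b, z - x⟫ * ⟪B.K x (z - x), u⟫)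
          + (⟪b, x⟫ * (⟪a, z - x⟫ * ⟪B.K x (z - x), u⟫)
          + (⟪a, x⟫ * ⟪b, x⟫) * ⟪B.K x (z - x), u⟫)) := by
    funext z; simp only [inner_sub_right]; ring
  have hI34 : Integrable (fun z : EuclideanSpace ℝ (Fin m) =>
      ⟪b, x⟫ * (⟪a, z - x⟫ * ⟪B.K x (z - x), u⟫)
        + (⟪a, x⟫ * ⟪b, x⟫) * ⟪B.K x (z - x), u⟫) (B.meas x) := hI3.add hI4
  have hI234 : Integrable (fun z : EuclideanSpace ℝ (Fin m) =>
      ⟪a, x⟫ * (⟪b, z - x⟫ * ⟪B.K x (z - x), u⟫)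
        + (⟪b, x⟫ * (⟪a, z - x⟫ * ⟪B.K x (z - x), u⟫)
          + (⟪a, x⟫ * ⟪b, x⟫) * ⟪B.K x (z - x), u⟫)) (B.meas x) := hI2.add hI34
  rw [hE, integral_add hI1 hI234, integral_add hI2 hI34,
    integral_add hI3 hI4, integral_const_mul, integral_const_mul, integral_const_mul,
    bm_L2 hPc B hx b u, bm_L2 hPc B hx a u, bm_Q0 hPc B hx u]
  ring


lemma bm_cov_coord (hPc : IsCompact P) (B : BernsteinMeasure m P)
    {x : EuclideanSpace ℝ (Fin m)} (hxP : x ∈ P) (a : EuclideanSpace ℝ (Fin m)) (i : Fin m) :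
    covMap (B.meas x) x a i
      = ∫ z, ⟪a, z - x⟫ * ⟪EuclideanSpace.single i (1:ℝ), z - x⟫ ∂B.meas x := by
  have hint : Integrable (fun z : EuclideanSpace ℝ (Fin m) => (⟪z - x, a⟫ : ℝ) • (z - x))
      (B.meas x) :=
    bm_integrable_s6 hPc B
      (by fun_prop) hxP
  have h1 : covMap (B.meas x) x a i = EuclideanSpace.proj i (covMap (B.meas x) x a) := rfl
  rw [h1, covMap, ← ContinuousLinearMap.integral_comp_comm _ hint]
  congr 1; funext z
  simp only [PiLp.proj_apply, PiLp.smul_apply, smul_eq_mul,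
    EuclideanSpace.inner_single_left, map_one, one_mul]
  rw [real_inner_comm]

lemma bm_key (hPc : IsCompact P) (B : BernsteinMeasure m P)
    {x : EuclideanSpace ℝ (Fin m)} (hx : x ∈ interior P)
    (a u' v' : EuclideanSpace ℝ (Fin m)) :
    ⟪covMap (B.meas x) x a, (fderiv ℝ B.K x u') v'⟫
      = - ∫ z, ⟪a, z - x⟫ * (⟪z - x, B.K x u'⟫ * ⟪z - x, B.K x v'⟫) ∂B.meas x := by
  have hxP : x ∈ P := interior_subset hx
  haveI := B.isProb x hxP
  have hKdiff : DifferentiableAt ℝ B.K x :=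
    (B.K_smooth.differentiableOn (by simp)).differentiableAt (isOpen_interior.mem_nhds hx)
  -- derivative of the coordinates of y ↦ B.K y v'
  have hψ : ∀ i : Fin m, HasFDerivAt (fun y => (B.K y v') i)
      ((EuclideanSpace.proj i).comp
        ((ContinuousLinearMap.apply ℝ (EuclideanSpace ℝ (Fin m)) v').comp (fderiv ℝ B.K x))) x := by
    intro i
    have h1 := hKdiff.hasFDerivAt
    have h2 := ((ContinuousLinearMap.apply ℝ (EuclideanSpace ℝ (Fin m)) v').hasFDerivAt).comp x h1
    exact ((EuclideanSpace.proj i).hasFDerivAt).comp x h2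
  have hΦ := fun i : Fin m => bm_phi hPc B hx a (EuclideanSpace.single i (1:ℝ))
  -- the function G
  have hsum : HasFDerivAt
      (fun y => ∑ i : Fin m,
        (∫ z, ⟪a, z - y⟫ * ⟪EuclideanSpace.single i (1:ℝ), z - y⟫ ∂B.meas y) * (B.K y v') i)
      (∑ i : Fin m,
        ((∫ z, ⟪a, z - x⟫ * ⟪EuclideanSpace.single i (1:ℝ), z - x⟫ ∂B.meas x) •
            ((EuclideanSpace.proj i).comp
              ((ContinuousLinearMap.apply ℝ (EuclideanSpace ℝ (Fin m)) v').comp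
                (fderiv ℝ B.K x)))
          + (B.K x v') i •
            fderiv ℝ (fun y =>
              ∫ z, ⟪a, z - y⟫ * ⟪EuclideanSpace.single i (1:ℝ), z - y⟫ ∂B.meas y) x)) x :=
    HasFDerivAt.fun_sum (fun i _ => HasFDerivAt.mul ((hΦ i).1.hasFDerivAt) (hψ i))
  -- G is constant near x
  have hGconst : (fun y => ∑ i : Fin m,
      (∫ z, ⟪a, z - y⟫ * ⟪EuclideanSpace.single i (1:ℝ), z - y⟫ ∂B.meas y) * (B.K y v') i)
      =ᶠ[𝓝 x] fun _ => ⟪a, v'⟫ := by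
    filter_upwards [isOpen_interior.mem_nhds hx] with y hy
    have hyP : y ∈ P := interior_subset hy
    haveI := B.isProb y hyP
    have hterm : ∀ i : Fin m,
        (∫ z, ⟪a, z - y⟫ * ⟪EuclideanSpace.single i (1:ℝ), z - y⟫ ∂B.meas y) * (B.K y v') i
          = ∫ z, ⟪a, z - y⟫ * ((z - y) i * (B.K y v') i) ∂B.meas y := by
      intro i
      rw [mul_comm, ← integral_const_mul]
      congr 1; funext z
      simp only [EuclideanSpace.inner_single_left, map_one, one_mul]
      ring
    have hint : ∀ i : Fin m, Integrable
        (fun z : EuclideanSpace ℝ (Fin m) => ⟪a, z - y⟫ * ((z - y) i * (B.K y v') i))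
        (B.meas y) := by
      intro i
      refine bm_integrable_s6 hPc B ?_ hyP
      exact (continuous_const.inner (continuous_id.sub continuous_const)).mul
        ((((EuclideanSpace.proj i).continuous.comp
          (continuous_id.sub continuous_const))).mul continuous_const)
    calc ∑ i : Fin m,
        (∫ z, ⟪a, z - y⟫ * ⟪EuclideanSpace.single i (1:ℝ), z - y⟫ ∂B.meas y) * (B.K y v') i
        = ∑ i : Fin m, ∫ z, ⟪a, z - y⟫ * ((z - y) i * (B.K y v') i) ∂B.meas y := by
          exact Finset.sum_congr rfl fun i _ => hterm i
      _ = ∫ z, ∑ i : Fin m, ⟪a, z - y⟫ * ((z - y) i * (B.K y v') i) ∂B.meas y :=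
          (integral_finset_sum _ (fun i _ => hint i)).symm
      _ = ∫ z, ⟪a, z - y⟫ * ⟪B.K y (z - y), v'⟫ ∂B.meas y := by
          congr 1; funext z
          rw [← Finset.mul_sum]
          congr 1
          rw [B.K_symm y hy (z - y) v']
          simp [PiLp.inner_apply, RCLike.inner_apply, conj_trivial, mul_comm]
      _ = ⟪a, v'⟫ := bm_L2 hPc B hy a v'
  -- derivative of G is zero
  have h0 : (∑ i : Fin m,
      ((∫ z, ⟪a, z - x⟫ * ⟪EuclideanSpace.single i (1:ℝ), z - x⟫ ∂B.meas x) •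
          ((EuclideanSpace.proj i).comp
            ((ContinuousLinearMap.apply ℝ (EuclideanSpace ℝ (Fin m)) v').comp
              (fderiv ℝ B.K x)))
        + (B.K x v') i •
          fderiv ℝ (fun y =>
            ∫ z, ⟪a, z - y⟫ * ⟪EuclideanSpace.single i (1:ℝ), z - y⟫ ∂B.meas y) x)) = 0 := by
    rw [← hsum.fderiv, hGconst.fderiv_eq]
    exact fderiv_const_apply _
  have h0u := congrArg (fun L : EuclideanSpace ℝ (Fin m) →L[ℝ] ℝ => L u') h0
  simp only [ContinuousLinearMap.coe_sum', Finset.sum_apply, ContinuousLinearMap.add_apply,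
    ContinuousLinearMap.coe_smul', Pi.smul_apply, ContinuousLinearMap.coe_comp',
    Function.comp_apply, ContinuousLinearMap.apply_apply, PiLp.proj_apply,
    ContinuousLinearMap.zero_apply, smul_eq_mul] at h0u
  -- h0u : ∑ i, (Φ i x * ((fderiv K x u') v') i + (K x v') i * fderiv (Φ i) x u') = 0
  have hsplit := Finset.sum_add_distrib (s := (Finset.univ : Finset (Fin m)))
    (f := fun i => (∫ z, ⟪a, z - x⟫ * ⟪EuclideanSpace.single i (1:ℝ), z - x⟫ ∂B.meas x) *
      ((fderiv ℝ B.K x u') v') i)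
    (g := fun i => (B.K x v') i *
      fderiv ℝ (fun y =>
        ∫ z, ⟪a, z - y⟫ * ⟪EuclideanSpace.single i (1:ℝ), z - y⟫ ∂B.meas y) x u')
  rw [hsplit] at h0u
  have hmain : ∑ i : Fin m,
      (∫ z, ⟪a, z - x⟫ * ⟪EuclideanSpace.single i (1:ℝ), z - x⟫ ∂B.meas x) *
        ((fderiv ℝ B.K x u') v') i
      = - ∑ i : Fin m, (B.K x v') i *
          fderiv ℝ (fun y =>
            ∫ z, ⟪a, z - y⟫ * ⟪EuclideanSpace.single i (1:ℝ), z - y⟫ ∂B.meas y) x u' := by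
    linarith [h0u]
  -- LHS is the inner product
  have hLHS : ⟪covMap (B.meas x) x a, (fderiv ℝ B.K x u') v'⟫
      = ∑ i : Fin m,
        (∫ z, ⟪a, z - x⟫ * ⟪EuclideanSpace.single i (1:ℝ), z - x⟫ ∂B.meas x) *
          ((fderiv ℝ B.K x u') v') i := by
    rw [PiLp.inner_apply]
    refine Finset.sum_congr rfl fun i _ => ?_
    rw [← bm_cov_coord hPc B hxP a i]
    simp [RCLike.inner_apply, conj_trivial, mul_comm]
  -- RHS computation
  have hterm2 : ∀ i : Fin m, (B.K x v') i *
      fderiv ℝ (fun y =>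
        ∫ z, ⟪a, z - y⟫ * ⟪EuclideanSpace.single i (1:ℝ), z - y⟫ ∂B.meas y) x u'
      = ∫ z, ⟪a, z - x⟫ * ⟪B.K x (z - x), u'⟫ * ((z - x) i * (B.K x v') i) ∂B.meas x := by
    intro i
    rw [(hΦ i).2 u', ← integral_const_mul]
    congr 1; funext z
    simp only [EuclideanSpace.inner_single_left, map_one, one_mul]
    ring
  have hint2 : ∀ i : Fin m, Integrable
      (fun z : EuclideanSpace ℝ (Fin m) =>
        ⟪a, z - x⟫ * ⟪B.K x (z - x), u'⟫ * ((z - x) i * (B.K x v') i)) (B.meas x) := by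
    intro i
    refine bm_integrable_s6 hPc B ?_ hxP
    exact ((continuous_const.inner (continuous_id.sub continuous_const)).mul
      (((B.K x).continuous.comp (continuous_id.sub continuous_const)).inner continuous_const)).mul
      ((((EuclideanSpace.proj i).continuous.comp
        (continuous_id.sub continuous_const))).mul continuous_const)
  have hRHS : ∑ i : Fin m, (B.K x v') i *
      fderiv ℝ (fun y =>
        ∫ z, ⟪a, z - y⟫ * ⟪EuclideanSpace.single i (1:ℝ), z - y⟫ ∂B.meas y) x u'
      = ∫ z, ⟪a, z - x⟫ * (⟪z - x, B.K x u'⟫ * ⟪z - x, B.K x v'⟫) ∂B.meas x := by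
    calc ∑ i : Fin m, (B.K x v') i *
        fderiv ℝ (fun y =>
          ∫ z, ⟪a, z - y⟫ * ⟪EuclideanSpace.single i (1:ℝ), z - y⟫ ∂B.meas y) x u'
        = ∑ i : Fin m, ∫ z,
            ⟪a, z - x⟫ * ⟪B.K x (z - x), u'⟫ * ((z - x) i * (B.K x v') i) ∂B.meas x :=
          Finset.sum_congr rfl fun i _ => hterm2 i
      _ = ∫ z, ∑ i : Fin m,
            ⟪a, z - x⟫ * ⟪B.K x (z - x), u'⟫ * ((z - x) i * (B.K x v') i) ∂B.meas x :=
          (integral_finset_sum _ (fun i _ => hint2 i)).symm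
      _ = ∫ z, ⟪a, z - x⟫ * (⟪z - x, B.K x u'⟫ * ⟪z - x, B.K x v'⟫) ∂B.meas x := by
          congr 1; funext z
          rw [← Finset.mul_sum]
          have hs : ∑ i : Fin m, (z - x) i * (B.K x v') i = ⟪z - x, B.K x v'⟫ := by
            rw [PiLp.inner_apply]
            simp [RCLike.inner_apply, conj_trivial, mul_comm]
          rw [hs, B.K_symm x hx (z - x) u']
          ring
  rw [hLHS, hmain, hRHS]


/-- The directional derivatives of the defining matrix `K` of a Bernstein
measure are symmetric: `[∇K(x)u]v = [∇K(x)v]u` for all `u, v ∈ ℝ^m` and `x ∈ P°`. -/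
theorem fderiv_definingMatrix_symm
    {m : ℕ} (P : Set (EuclideanSpace ℝ (Fin m)))
    (hP : ∃ V : Finset (EuclideanSpace ℝ (Fin m)),
      P = convexHull ℝ (V : Set (EuclideanSpace ℝ (Fin m))))
    (hPo : (interior P).Nonempty)
    (B : BernsteinMeasure m P) :
    ∀ x ∈ interior P, ∀ u v : EuclideanSpace ℝ (Fin m),
      (fderiv ℝ B.K x u) v = (fderiv ℝ B.K x v) u := by
  have hPc : IsCompact P := by
    obtain ⟨V, hV⟩ := hP
    rw [hV]
    exact V.finite_toSet.isCompact_convexHull ℝ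
  intro x hx u v
  have hsym : ∀ a : EuclideanSpace ℝ (Fin m),
      ⟪covMap (B.meas x) x a, (fderiv ℝ B.K x u) v - (fderiv ℝ B.K x v) u⟫ = 0 := by
    intro a
    rw [inner_sub_right, bm_key hPc B hx a u v, bm_key hPc B hx a v u]
    have hcomm : ∫ z, ⟪a, z - x⟫ * (⟪z - x, B.K x u⟫ * ⟪z - x, B.K x v⟫) ∂B.meas x
        = ∫ z, ⟪a, z - x⟫ * (⟪z - x, B.K x v⟫ * ⟪z - x, B.K x u⟫) ∂B.meas x := by
      congr 1; funext z; ring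
    rw [hcomm]; ring
  have hD := hsym (B.K x ((fderiv ℝ B.K x u) v - (fderiv ℝ B.K x v) u))
  rw [bm_covK hPc B hx] at hD
  have h2 : (fderiv ℝ B.K x u) v - (fderiv ℝ B.K x v) u = 0 :=
    inner_self_eq_zero.mp hD
  exact sub_eq_zero.mp h2

end
end

section
/- Let K : P° → Sym(m,ℝ) be a smooth map. If B and B' are two Bernstein measures on P both having K as their defining matrix, then B = B', i.e. dB_x = dB'_x for every x ∈ P. In other words, a Bernstein measure with a given defining matrix is unique if it exists. -/
/- Setting: `P ⊆ ℝ^m` is a compact convex polytope (convex hull of a finite set) with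
nonempty interior.  `M(P)` is modelled by measures on `ℝ^m` that are probability measures
giving full mass to `P`; weak-* continuity of `x ↦ dB_x` is expressed by continuity of
`x ↦ ∫ f dB_x` for every `f` continuous on `P`. -/

open MeasureTheory Filter Set
open scoped RealInnerProductSpace ENNReal Topology

noncomputable section

namespace BMaux

variable {m : ℕ} {P : Set (EuclideanSpace ℝ (Fin m))}

lemma cont_coord (j : Fin m) : Continuous fun z : EuclideanSpace ℝ (Fin m) => z j := by
  simpa using (EuclideanSpace.proj (𝕜 := ℝ) j).continuous

lemma bm_integrable (hPc : IsCompact P) (B : BernsteinMeasure m P) {x} (hx : x ∈ P)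
    {F : Type*} [NormedAddCommGroup F] {f : EuclideanSpace ℝ (Fin m) → F}
    (hf : Continuous f) : Integrable f (B.meas x) := by
  haveI := B.isProb x hx
  have hres : (B.meas x).restrict P = B.meas x :=
    Measure.restrict_eq_self_of_ae_mem (by
      rw [ae_iff]
      exact B.suppIn x hx)
  rw [← hres]
  exact hf.continuousOn.integrableOn_compact hPc

lemma bm_integral_coord (hPc : IsCompact P) (B : BernsteinMeasure m P) {x} (hx : x ∈ P)
    (j : Fin m) : ∫ z, z j ∂(B.meas x) = x j := by
  haveI := B.isProb x hx
  have hint : Integrable (fun z : EuclideanSpace ℝ (Fin m) => z) (B.meas x) :=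
    bm_integrable hPc B hx continuous_id
  have h := (EuclideanSpace.proj (𝕜 := ℝ) j).integral_comp_comm hint
  simpa [B.bary x hx] using h

lemma bm_fderiv_coord (hPc : IsCompact P) (B : BernsteinMeasure m P) {x} (hx : x ∈ interior P)
    (v : EuclideanSpace ℝ (Fin m)) (j : Fin m) :
    ((v j : ℝ) : ℂ) = ∫ z, ((z j : ℝ) : ℂ) * ((⟪B.K x (z - x), v⟫ : ℝ) : ℂ) ∂(B.meas x) := by
  have hf : ContinuousOn (fun z : EuclideanSpace ℝ (Fin m) => ((z j : ℝ) : ℂ)) P :=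
    (Complex.continuous_ofReal.comp (cont_coord j)).continuousOn
  have hgrad := B.grad_eq _ hf x hx v
  have hev : (fun y => ∫ z, ((z j : ℝ) : ℂ) ∂(B.meas y))
      =ᶠ[𝓝 x] (fun y : EuclideanSpace ℝ (Fin m) => ((y j : ℝ) : ℂ)) := by
    filter_upwards [isOpen_interior.mem_nhds hx] with y hy
    have hIR : ∫ z, ((z j : ℝ) : ℂ) ∂(B.meas y) = ((∫ z, z j ∂(B.meas y) : ℝ) : ℂ) :=
      integral_ofReal
    rw [hIR, bm_integral_coord hPc B (interior_subset hy) j]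
  have hL : (fun y : EuclideanSpace ℝ (Fin m) => ((y j : ℝ) : ℂ))
      = ⇑(Complex.ofRealCLM.comp (EuclideanSpace.proj (𝕜 := ℝ) j)) := by
    funext y; simp
  rw [hev.fderiv_eq, hL, ContinuousLinearMap.fderiv] at hgrad
  simpa using hgrad

lemma bm_K_bijective (hPc : IsCompact P) (B : BernsteinMeasure m P) {x} (hx : x ∈ interior P) :
    Function.Bijective (B.K x) := by
  have hinj : Function.Injective (B.K x) := by
    rw [injective_iff_map_eq_zero]
    intro v hv
    ext j
    have h := bm_fderiv_coord hPc B hx v j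
    simp_rw [B.K_symm x hx, hv, inner_zero_right, Complex.ofReal_zero, mul_zero,
      integral_zero] at h
    have h2 : (v j : ℂ) = 0 := by simpa using h
    simpa using h2
  refine ⟨hinj, ?_⟩
  have := (LinearMap.injective_iff_surjective
    (f := (B.K x : EuclideanSpace ℝ (Fin m) →ₗ[ℝ] EuclideanSpace ℝ (Fin m)))).mp hinj
  exact this

lemma cont_evalE (p : MvPolynomial (Fin m) ℝ) :
    Continuous fun z : EuclideanSpace ℝ (Fin m) => MvPolynomial.eval (fun j => z j) p :=
 by
  exact (MvPolynomial.continuous_eval p).comp (continuous_pi fun j => cont_coord j)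

lemma bm_step (hPc : IsCompact P) (B B' : BernsteinMeasure m P)
    (hK : ∀ x ∈ interior P, B.K x = B'.K x)
    {f : EuclideanSpace ℝ (Fin m) → ℂ} (hf : Continuous f)
    (hQ : ∀ x ∈ interior P, ∫ z, f z ∂(B.meas x) = ∫ z, f z ∂(B'.meas x))
    (j : Fin m) {x} (hx : x ∈ interior P) :
    ∫ z, f z * ((z j : ℝ) : ℂ) ∂(B.meas x) = ∫ z, f z * ((z j : ℝ) : ℂ) ∂(B'.meas x) := by
  have hxP := interior_subset hx
  have hfd : fderiv ℝ (fun y => ∫ z, f z ∂(B.meas y)) x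
      = fderiv ℝ (fun y => ∫ z, f z ∂(B'.meas y)) x := by
    apply Filter.EventuallyEq.fderiv_eq
    filter_upwards [isOpen_interior.mem_nhds hx] with y hy using hQ y hy
  have e1 : ∀ v, ∫ z, f z * ((⟪B.K x (z - x), v⟫ : ℝ) : ℂ) ∂(B.meas x)
      = ∫ z, f z * ((⟪B'.K x (z - x), v⟫ : ℝ) : ℂ) ∂(B'.meas x) := by
    intro v
    rw [← B.grad_eq f hf.continuousOn x hx v, ← B'.grad_eq f hf.continuousOn x hx v, hfd]
  have e2 : ∀ w, ∫ z, f z * ((⟪z - x, w⟫ : ℝ) : ℂ) ∂(B.meas x)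
      = ∫ z, f z * ((⟪z - x, w⟫ : ℝ) : ℂ) ∂(B'.meas x) := by
    intro w
    obtain ⟨v, rfl⟩ := (bm_K_bijective hPc B hx).2 w
    have h := e1 v
    simp_rw [B.K_symm x hx, B'.K_symm x hx] at h
    rw [show B'.K x = B.K x from (hK x hx).symm] at h
    exact h
  have h3 := e2 (EuclideanSpace.single j (1 : ℝ))
  have hin : ∀ z : EuclideanSpace ℝ (Fin m),
      (⟪z - x, EuclideanSpace.single j (1 : ℝ)⟫ : ℝ) = z j - x j := by
    intro z
    rw [EuclideanSpace.inner_single_right]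
    simp [PiLp.sub_apply]
  simp_rw [hin] at h3
  have hexp : ∀ z : EuclideanSpace ℝ (Fin m),
      f z * ((z j - x j : ℝ) : ℂ) = f z * ((z j : ℝ) : ℂ) - ((x j : ℝ) : ℂ) * f z := by
    intro z; push_cast; ring
  simp_rw [hexp] at h3
  haveI := B.isProb x hxP; haveI := B'.isProb x hxP
  have hcj : Continuous fun z : EuclideanSpace ℝ (Fin m) => ((z j : ℝ) : ℂ) :=
    Complex.continuous_ofReal.comp (cont_coord j)
  have i1 : Integrable (fun z => f z * ((z j : ℝ) : ℂ)) (B.meas x) :=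
    bm_integrable hPc B hxP (hf.mul hcj)
  have i2 : Integrable (fun z => ((x j : ℝ) : ℂ) * f z) (B.meas x) :=
    bm_integrable hPc B hxP (continuous_const.mul hf)
  have i1' : Integrable (fun z => f z * ((z j : ℝ) : ℂ)) (B'.meas x) :=
    bm_integrable hPc B' hxP (hf.mul hcj)
  have i2' : Integrable (fun z => ((x j : ℝ) : ℂ) * f z) (B'.meas x) :=
    bm_integrable hPc B' hxP (continuous_const.mul hf)
  rw [integral_sub i1 i2, integral_sub i1' i2', integral_const_mul, integral_const_mul,
    hQ x hx] at h3
  exact sub_left_inj.mp h3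

lemma bm_poly (hPc : IsCompact P) (B B' : BernsteinMeasure m P)
    (hK : ∀ x ∈ interior P, B.K x = B'.K x) (p : MvPolynomial (Fin m) ℝ) :
    ∀ x ∈ interior P,
      ∫ z, ((MvPolynomial.eval (fun j => z j) p : ℝ) : ℂ) ∂(B.meas x)
        = ∫ z, ((MvPolynomial.eval (fun j => z j) p : ℝ) : ℂ) ∂(B'.meas x) := by
  induction p using MvPolynomial.induction_on with
  | C a =>
      intro x hx
      haveI := B.isProb x (interior_subset hx)
      haveI := B'.isProb x (interior_subset hx)
      simp [MvPolynomial.eval_C]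
  | add p q hp hq =>
      intro x hx
      have hxP := interior_subset hx
      have ip : Integrable
          (fun z : EuclideanSpace ℝ (Fin m) => ((MvPolynomial.eval (fun j => z j) p : ℝ) : ℂ))
          (B.meas x) :=
        bm_integrable hPc B hxP (by exact Complex.continuous_ofReal.comp (cont_evalE p))
      have iq : Integrable
          (fun z : EuclideanSpace ℝ (Fin m) => ((MvPolynomial.eval (fun j => z j) q : ℝ) : ℂ))
          (B.meas x) :=
        bm_integrable hPc B hxP (by exact Complex.continuous_ofReal.comp (cont_evalE q))
      have ip' : Integrable
          (fun z : EuclideanSpace ℝ (Fin m) => ((MvPolynomial.eval (fun j => z j) p : ℝ) : ℂ))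
          (B'.meas x) :=
        bm_integrable hPc B' hxP (by exact Complex.continuous_ofReal.comp (cont_evalE p))
      have iq' : Integrable
          (fun z : EuclideanSpace ℝ (Fin m) => ((MvPolynomial.eval (fun j => z j) q : ℝ) : ℂ))
          (B'.meas x) :=
        bm_integrable hPc B' hxP (by exact Complex.continuous_ofReal.comp (cont_evalE q))
      simp_rw [map_add, Complex.ofReal_add]
      rw [integral_add ip iq, integral_add ip' iq', hp x hx, hq x hx]
  | mul_X p n hp =>
      intro x hx
      have cp : Continuous fun z : EuclideanSpace ℝ (Fin m) =>
          ((MvPolynomial.eval (fun j => z j) p : ℝ) : ℂ) := by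
        exact Complex.continuous_ofReal.comp (cont_evalE p)
      have h := bm_step hPc B B' hK cp hp n hx
      simp_rw [map_mul, MvPolynomial.eval_X, Complex.ofReal_mul]
      exact h

lemma bm_poly_real (hPc : IsCompact P) (B B' : BernsteinMeasure m P)
    (hK : ∀ x ∈ interior P, B.K x = B'.K x) (p : MvPolynomial (Fin m) ℝ)
    {x} (hx : x ∈ interior P) :
    ∫ z, MvPolynomial.eval (fun j => z j) p ∂(B.meas x)
      = ∫ z, MvPolynomial.eval (fun j => z j) p ∂(B'.meas x) := by
  have h := bm_poly hPc B B' hK p x hx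
  have h1 : (∫ z, ((MvPolynomial.eval (fun j => z j) p : ℝ) : ℂ) ∂(B.meas x))
      = ((∫ z, MvPolynomial.eval (fun j => z j) p ∂(B.meas x) : ℝ) : ℂ) := integral_ofReal
  have h2 : (∫ z, ((MvPolynomial.eval (fun j => z j) p : ℝ) : ℂ) ∂(B'.meas x))
      = ((∫ z, MvPolynomial.eval (fun j => z j) p ∂(B'.meas x) : ℝ) : ℂ) := integral_ofReal
  rw [h1, h2] at h
  exact_mod_cast h

lemma bm_ae_mem (B : BernsteinMeasure m P) {x} (hx : x ∈ P) :
    ∀ᵐ z ∂(B.meas x), z ∈ P := by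
  rw [ae_iff]; exact B.suppIn x hx

lemma bm_cont_interior (hPc : IsCompact P) (B B' : BernsteinMeasure m P)
    (hK : ∀ x ∈ interior P, B.K x = B'.K x) {g : EuclideanSpace ℝ (Fin m) → ℝ}
    (hg : Continuous g) {x} (hx : x ∈ interior P) :
    ∫ z, g z ∂(B.meas x) = ∫ z, g z ∂(B'.meas x) := by
  have hxP := interior_subset hx
  haveI := B.isProb x hxP; haveI := B'.isProb x hxP
  haveI : CompactSpace ↥P := isCompact_iff_compactSpace.mp hPc
  set coordC : Fin m → C(↥P, ℝ) :=
    fun j => ⟨fun y => (y : EuclideanSpace ℝ (Fin m)) j,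
      (cont_coord j).comp continuous_subtype_val⟩ with hcoordC
  set Φ : MvPolynomial (Fin m) ℝ →ₐ[ℝ] C(↥P, ℝ) := MvPolynomial.aeval coordC with hΦdef
  have hΦ : ∀ q (y : ↥P),
      Φ q y = MvPolynomial.eval (fun j => (y : EuclideanSpace ℝ (Fin m)) j) q := by
    intro q
    induction q using MvPolynomial.induction_on with
    | C a => intro y; simp [hΦdef]
    | add p q hp hq => intro y; simp [map_add, hp, hq]
    | mul_X p n hp => intro y; simp [map_mul, hp, hΦdef, hcoordC]; exact Or.inl (hp y)
  have hsep : (Φ.range).SeparatesPoints := by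
    intro a b hab
    have hex : ∃ j, (a : EuclideanSpace ℝ (Fin m)) j ≠ (b : EuclideanSpace ℝ (Fin m)) j := by
      by_contra hcon; push_neg at hcon
      exact hab (Subtype.ext (by ext j; exact hcon j))
    obtain ⟨j, hj⟩ := hex
    have hXj : Φ (MvPolynomial.X j) = coordC j := by
      ext y; simp [hΦ, hcoordC]
    exact ⟨⇑(coordC j), ⟨coordC j, ⟨MvPolynomial.X j, hXj⟩, rfl⟩, hj⟩
  set gP : C(↥P, ℝ) := ⟨fun y => g y, hg.comp continuous_subtype_val⟩ with hgP
  set A := ∫ z, g z ∂(B.meas x) with hA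
  set A' := ∫ z, g z ∂(B'.meas x) with hA'
  have happrox : ∀ ε : ℝ, 0 < ε → |A - A'| ≤ 2 * ε := by
    intro ε hε
    obtain ⟨q0, hq0⟩ := ContinuousMap.exists_mem_subalgebra_near_continuousMap_of_separatesPoints
      Φ.range hsep gP ε hε
    obtain ⟨q, hq⟩ := q0.2
    set e : EuclideanSpace ℝ (Fin m) → ℝ := fun z => MvPolynomial.eval (fun j => z j) q with he
    have hbound : ∀ y ∈ P, |g y - e y| ≤ ε := by
      intro y hy
      have h1 : (gP - Φ q) ⟨y, hy⟩ = g y - e y := by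
        simp [hgP, he, hΦ q]
      have h2 : ‖(gP - Φ q) ⟨y, hy⟩‖ ≤ ‖gP - Φ q‖ := (gP - Φ q).norm_coe_le_norm _
      rw [h1, Real.norm_eq_abs] at h2
      refine h2.trans ?_
      have hq' : (Φ q : C(↥P, ℝ)) = ↑q0 := hq
      rw [show gP - Φ q = -((Φ q) - gP) by ring, norm_neg, hq']
      exact hq0.le
    have ie : Integrable e (B.meas x) := bm_integrable hPc B hxP (cont_evalE q)
    have ie' : Integrable e (B'.meas x) := bm_integrable hPc B' hxP (cont_evalE q)
    have ig : Integrable g (B.meas x) := bm_integrable hPc B hxP hg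
    have ig' : Integrable g (B'.meas x) := bm_integrable hPc B' hxP hg
    have key : ∫ z, e z ∂(B.meas x) = ∫ z, e z ∂(B'.meas x) :=
      bm_poly_real hPc B B' hK q hx
    have d1 : |A - ∫ z, e z ∂(B.meas x)| ≤ ε := by
      rw [hA, ← integral_sub ig ie]
      have hb : ∀ᵐ z ∂(B.meas x), ‖g z - e z‖ ≤ ε := by
        filter_upwards [bm_ae_mem B hxP] with z hz
        simpa [Real.norm_eq_abs] using hbound z hz
      have := norm_integral_le_of_norm_le_const hb
      simpa [measure_univ, Real.norm_eq_abs] using this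
    have d2 : |∫ z, e z ∂(B'.meas x) - A'| ≤ ε := by
      rw [hA', ← integral_sub ie' ig']
      have hb : ∀ᵐ z ∂(B'.meas x), ‖e z - g z‖ ≤ ε := by
        filter_upwards [bm_ae_mem B' hxP] with z hz
        simpa [Real.norm_eq_abs, abs_sub_comm] using hbound z hz
      have := norm_integral_le_of_norm_le_const hb
      simpa [measure_univ, Real.norm_eq_abs] using this
    have hdecomp : A - A' = (A - ∫ z, e z ∂(B.meas x)) + (∫ z, e z ∂(B'.meas x) - A') := by
      rw [← key]; ring
    rw [hdecomp]
    calc |(A - ∫ z, e z ∂(B.meas x)) + (∫ z, e z ∂(B'.meas x) - A')|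
        ≤ |A - ∫ z, e z ∂(B.meas x)| + |∫ z, e z ∂(B'.meas x) - A'| := abs_add_le _ _
      _ ≤ 2 * ε := by linarith
  have h0 : |A - A'| ≤ 0 := by
    by_contra hcon
    push_neg at hcon
    have := happrox (|A - A'| / 4) (by linarith)
    linarith
  have := le_antisymm h0 (abs_nonneg _)
  rwa [abs_eq_zero, sub_eq_zero] at this

lemma mem_closure_interior (hconv : Convex ℝ P) (hPo : (interior P).Nonempty)
    {x} (hx : x ∈ P) : x ∈ closure (interior P) := by
  obtain ⟨y, hy⟩ := hPo
  have hcont : Continuous fun t : ℝ => t • y + (1 - t) • x := by continuity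
  have htend : Tendsto (fun t : ℝ => t • y + (1 - t) • x) (𝓝[>] (0 : ℝ)) (𝓝 x) := by
    have h1 := (hcont.tendsto 0).mono_left (nhdsWithin_le_nhds (s := Ioi (0 : ℝ)))
    simpa using h1
  apply mem_closure_of_tendsto htend
  filter_upwards [Ioc_mem_nhdsGT_of_mem (Set.left_mem_Ico.mpr zero_lt_one)] with t ht
  exact hconv.combo_interior_self_mem_interior hy hx ht.1 (by linarith [ht.2]) (by ring)

lemma bm_cont_all (hPc : IsCompact P) (hconv : Convex ℝ P) (hPo : (interior P).Nonempty)
    (B B' : BernsteinMeasure m P) (hK : ∀ x ∈ interior P, B.K x = B'.K x)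
    {g : EuclideanSpace ℝ (Fin m) → ℝ} (hg : Continuous g) {x} (hx : x ∈ P) :
    ∫ z, g z ∂(B.meas x) = ∫ z, g z ∂(B'.meas x) := by
  set f : EuclideanSpace ℝ (Fin m) → ℂ := fun z => ((g z : ℝ) : ℂ) with hf
  have hfc : ContinuousOn f P := (Complex.continuous_ofReal.comp hg).continuousOn
  set h : EuclideanSpace ℝ (Fin m) → ℂ := fun y => ∫ z, f z ∂(B.meas y) with hh
  set h' : EuclideanSpace ℝ (Fin m) → ℂ := fun y => ∫ z, f z ∂(B'.meas y) with hh'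
  have heq : ∀ y ∈ interior P, h y = h' y := by
    intro y hy
    have hr := bm_cont_interior hPc B B' hK hg hy
    have e1 : h y = ((∫ z, g z ∂(B.meas y) : ℝ) : ℂ) := integral_ofReal
    have e2 : h' y = ((∫ z, g z ∂(B'.meas y) : ℝ) : ℂ) := integral_ofReal
    rw [e1, e2, hr]
  haveI hne : (𝓝[interior P] x).NeBot :=
    mem_closure_iff_nhdsWithin_neBot.mp (mem_closure_interior hconv hPo hx)
  have t1 : Tendsto h (𝓝[interior P] x) (𝓝 (h x)) :=
    ((B.weakCont f hfc x hx).mono_left (nhdsWithin_mono x interior_subset))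
  have t2 : Tendsto h (𝓝[interior P] x) (𝓝 (h' x)) := by
    have t2' : Tendsto h' (𝓝[interior P] x) (𝓝 (h' x)) :=
      ((B'.weakCont f hfc x hx).mono_left (nhdsWithin_mono x interior_subset))
    apply t2'.congr'
    filter_upwards [eventually_mem_nhdsWithin] with y hy
    exact (heq y hy).symm
  have hhx : h x = h' x := tendsto_nhds_unique t1 t2
  have e1 : h x = ((∫ z, g z ∂(B.meas x) : ℝ) : ℂ) := integral_ofReal
  have e2 : h' x = ((∫ z, g z ∂(B'.meas x) : ℝ) : ℂ) := integral_ofReal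
  rw [e1, e2] at hhx
  exact_mod_cast hhx

end BMaux

open BMaux in
/-- A Bernstein measure with a given defining matrix is unique: if two
Bernstein measures on `P` have the same defining matrix on `P°`, then they agree on `P`. -/
theorem bernsteinMeasure_unique_of_definingMatrix
    {m : ℕ} (P : Set (EuclideanSpace ℝ (Fin m)))
    (hP : ∃ V : Finset (EuclideanSpace ℝ (Fin m)),
      P = convexHull ℝ (V : Set (EuclideanSpace ℝ (Fin m))))
    (hPo : (interior P).Nonempty)
    (B B' : BernsteinMeasure m P)
    (hK : ∀ x ∈ interior P, B.K x = B'.K x) :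
    ∀ x ∈ P, B.meas x = B'.meas x := by
  intro x hx
  obtain ⟨V, hV⟩ := hP
  have hPc : IsCompact P := hV ▸ V.finite_toSet.isCompact_convexHull ℝ
  have hconv : Convex ℝ P := hV ▸ convex_convexHull ℝ _
  haveI := B.isProb x hx; haveI := B'.isProb x hx
  apply ext_of_forall_lintegral_eq_of_IsFiniteMeasure
  intro f
  have hg : Continuous fun z : EuclideanSpace ℝ (Fin m) => ((f z : NNReal) : ℝ) :=
    NNReal.continuous_coe.comp f.continuous
  have h1 := lintegral_coe_eq_integral (fun z => f z) (bm_integrable hPc B hx hg)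
  have h2 := lintegral_coe_eq_integral (fun z => f z) (bm_integrable hPc B' hx hg)
  rw [h1, h2, bm_cont_all hPc hconv hPo B B' hK hg hx]
end
end

section
/- Let S ⊂ ℝ^m be a finite set whose convex hull P has nonempty interior and let c : S → ℝ_{>0}. Let m_{S,c,α} (α ∈ S) denote the continuous extensions to P of the functions defined on P° via the inverse moment map. Then the map B_{S,c} : P → M(P) defined by B_{S,c}(x) = Σ_{α∈S} m_{S,c,α}(x) δ_α is a finitely supported Bernstein measure on P with support S, whose defining matrix is K(x) = A_{S,c}(x)^{-1} where A_{S,c}(x) = Σ_{α∈S} m_{S,c,α}(x)(α−x)⊗(α−x). -/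
/- Setting: `P ⊆ ℝ^m` is a compact convex polytope (convex hull of a finite set) with
nonempty interior.  `M(P)` is modelled by measures on `ℝ^m` that are probability measures
giving full mass to `P`; weak-* continuity of `x ↦ dB_x` is expressed by continuity of
`x ↦ ∫ f dB_x` for every `f` continuous on `P`. -/

open MeasureTheory Filter Set
open scoped RealInnerProductSpace ENNReal Topology

noncomputable section

/-- `χ_{S,c}(τ) = Σ_{α∈S} c(α) e^{⟨α,τ⟩}`. -/
def chiSc {m : ℕ} (S : Finset (EuclideanSpace ℝ (Fin m)))
    (c : EuclideanSpace ℝ (Fin m) → ℝ) (τ : EuclideanSpace ℝ (Fin m)) : ℝ :=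
  ∑ α ∈ S, c α * Real.exp ⟪α, τ⟫

/-- The moment map `μ_{S,c}(τ) = Σ_{α∈S} (c(α) e^{⟨α,τ⟩} / χ_{S,c}(τ)) · α`. -/
def muSc {m : ℕ} (S : Finset (EuclideanSpace ℝ (Fin m)))
    (c : EuclideanSpace ℝ (Fin m) → ℝ) (τ : EuclideanSpace ℝ (Fin m)) :
    EuclideanSpace ℝ (Fin m) :=
  (chiSc S c τ)⁻¹ • ∑ α ∈ S, (c α * Real.exp ⟪α, τ⟫) • α

/-- `m_{S,c,α}(x) = c(α) e^{⟨α,τ_{S,c}(x)⟩} / χ_{S,c}(τ_{S,c}(x))`, for a given inverse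
`τSc` of the moment map. -/
def mSc {m : ℕ} (S : Finset (EuclideanSpace ℝ (Fin m)))
    (c : EuclideanSpace ℝ (Fin m) → ℝ)
    (τSc : EuclideanSpace ℝ (Fin m) → EuclideanSpace ℝ (Fin m))
    (α x : EuclideanSpace ℝ (Fin m)) : ℝ :=
  c α * Real.exp ⟪α, τSc x⟫ / chiSc S c (τSc x)

/-- The matrix `A_{S,c}(x) = Σ_{α∈S} m_{S,c,α}(x) (α−x)⊗(α−x)` acting on a vector `v`,
built from the continuous extensions `M α` of the functions `m_{S,c,α}`. -/
def AScMap {m : ℕ} (S : Finset (EuclideanSpace ℝ (Fin m)))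
    (M : EuclideanSpace ℝ (Fin m) → EuclideanSpace ℝ (Fin m) → ℝ)
    (x v : EuclideanSpace ℝ (Fin m)) : EuclideanSpace ℝ (Fin m) :=
  ∑ α ∈ S, (M α x * ⟪α - x, v⟫) • (α - x)


section Aux
variable {m : ℕ}
local notation "𝔼" => EuclideanSpace ℝ (Fin m)


lemma integrable_dirac' {F : Type*} [NormedAddCommGroup F] (f : 𝔼 → F) (a : 𝔼) :
    Integrable f (Measure.dirac a) :=
  (integrable_congr (ae_eq_dirac f)).2 (integrable_const _)

lemma integral_diracSum {F : Type*} [NormedAddCommGroup F] [NormedSpace ℝ F] [CompleteSpace F]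
    (S : Finset 𝔼) (w : 𝔼 → ℝ) (f : 𝔼 → F) :
    ∫ z, f z ∂(∑ α ∈ S, ENNReal.ofReal (w α) • Measure.dirac α)
      = ∑ α ∈ S, (ENNReal.ofReal (w α)).toReal • f α := by
  rw [integral_finset_sum_measure (fun α _ => (integrable_dirac' f α).smul_measure
      ENNReal.ofReal_ne_top)]
  refine Finset.sum_congr rfl fun α _ => ?_
  rw [integral_smul_measure, integral_dirac]


def covCLM (S : Finset 𝔼) (w : 𝔼 → ℝ) (x : 𝔼) : 𝔼 →L[ℝ] 𝔼 :=
  ∑ α ∈ S, w α • ((innerSL ℝ (α - x)).smulRight (α - x))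

lemma covCLM_apply (S : Finset 𝔼) (w : 𝔼 → ℝ) (x v : 𝔼) :
    covCLM S w x v = ∑ α ∈ S, (w α * ⟪α - x, v⟫) • (α - x) := by
  rw [covCLM, ContinuousLinearMap.sum_apply]
  refine Finset.sum_congr rfl fun α _ => ?_
  rw [ContinuousLinearMap.smul_apply, ContinuousLinearMap.smulRight_apply, innerSL_apply_apply,
    smul_smul]

lemma covCLM_symm (S : Finset 𝔼) (w : 𝔼 → ℝ) (x u v : 𝔼) :
    ⟪covCLM S w x u, v⟫ = ⟪u, covCLM S w x v⟫ := by
  simp only [covCLM_apply, sum_inner, inner_sum, real_inner_smul_left, real_inner_smul_right]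
  refine Finset.sum_congr rfl fun α _ => ?_
  rw [real_inner_comm u (α - x)]
  ring

lemma contDiff_rankOne (α : 𝔼) :
    ContDiff ℝ (⊤ : ℕ∞) (fun y : 𝔼 => (innerSL ℝ (α - y)).smulRight (α - y)) := by
  have h0 : ContDiff ℝ (⊤ : ℕ∞) (fun y : 𝔼 => α - y) := contDiff_const.sub contDiff_id
  have h1 : ContDiff ℝ (⊤ : ℕ∞) (fun y : 𝔼 => innerSL ℝ (α - y)) :=
    (innerSL ℝ : EuclideanSpace ℝ (Fin m) →L[ℝ] _).contDiff.comp h0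
  exact (isBoundedBilinearMap_smulRight (𝕜 := ℝ)
    (E := EuclideanSpace ℝ (Fin m)) (F := EuclideanSpace ℝ (Fin m))).contDiff.comp (h1.prodMk h0)





def pfun (S : Finset 𝔼) (c : 𝔼 → ℝ) (α τ : 𝔼) : ℝ := c α * Real.exp ⟪α, τ⟫ / chiSc S c τ

lemma chi_pos {S : Finset 𝔼} {c : 𝔼 → ℝ} (hS : S.Nonempty) (hc : ∀ α ∈ S, 0 < c α) (τ : 𝔼) :
    0 < chiSc S c τ :=
  Finset.sum_pos (fun α hα => mul_pos (hc α hα) (Real.exp_pos _)) hS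

lemma hasFDerivAt_g (c : 𝔼 → ℝ) (α τ₀ : 𝔼) :
    HasFDerivAt (fun τ => c α * Real.exp ⟪α, τ⟫)
      ((c α * Real.exp ⟪α, τ₀⟫) • innerSL ℝ α) τ₀ := by
  have h1 : HasFDerivAt (fun τ : 𝔼 => ⟪α, τ⟫) (innerSL ℝ α) τ₀ := (innerSL ℝ α).hasFDerivAt
  have h2 := ((Real.hasDerivAt_exp ⟪α, τ₀⟫).comp_hasFDerivAt τ₀ h1).const_mul (c α)
  exact h2.congr_fderiv (smul_smul _ _ _)

lemma hasFDerivAt_chi (S : Finset 𝔼) (c : 𝔼 → ℝ) (τ₀ : 𝔼) :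
    HasFDerivAt (chiSc S c) (∑ α ∈ S, (c α * Real.exp ⟪α, τ₀⟫) • innerSL ℝ α) τ₀ := by
  exact HasFDerivAt.fun_sum fun α _ => hasFDerivAt_g c α τ₀

lemma inner_muSc (S : Finset 𝔼) (c : 𝔼 → ℝ) (τ v : 𝔼) :
    ⟪muSc S c τ, v⟫ = (chiSc S c τ)⁻¹ * ∑ α ∈ S, c α * Real.exp ⟪α, τ⟫ * ⟪α, v⟫ := by
  simp only [muSc, real_inner_smul_left, sum_inner]

lemma hasFDerivAt_pfun {S : Finset 𝔼} {c : 𝔼 → ℝ} (hS : S.Nonempty) (hc : ∀ α ∈ S, 0 < c α)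
    (α : 𝔼) (hα : α ∈ S) (τ₀ : 𝔼) :
    HasFDerivAt (pfun S c α) (pfun S c α τ₀ • innerSL ℝ (α - muSc S c τ₀)) τ₀ := by
  have hχ := (chi_pos hS hc τ₀).ne'
  have hinv : HasFDerivAt (fun τ => (chiSc S c τ)⁻¹)
      ((-(chiSc S c τ₀ ^ 2)⁻¹) • ∑ β ∈ S, (c β * Real.exp ⟪β, τ₀⟫) • innerSL ℝ β) τ₀ :=
    (hasDerivAt_inv hχ).comp_hasFDerivAt τ₀ (hasFDerivAt_chi S c τ₀)
  have h := (hasFDerivAt_g c α τ₀).mul hinv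
  have hpq : pfun S c α = fun τ => (c α * Real.exp ⟪α, τ⟫) * (chiSc S c τ)⁻¹ := by
    funext τ; simp [pfun, div_eq_mul_inv]
  rw [hpq]
  refine h.congr_fderiv (Eq.symm ?_)
  ext v
  have hμ := inner_muSc S c τ₀ v
  simp only [ContinuousLinearMap.smul_apply, innerSL_apply_apply, ContinuousLinearMap.coe_smul',
    Pi.smul_apply, ContinuousLinearMap.coe_sub', Pi.sub_apply, ContinuousLinearMap.coe_sum',
    Finset.sum_apply, smul_eq_mul, inner_sub_left, pfun, ContinuousLinearMap.add_apply,
    ContinuousLinearMap.neg_apply, ContinuousLinearMap.sum_apply, neg_mul]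
  rw [hμ]
  field_simp
  ring

lemma sum_pfun {S : Finset 𝔼} {c : 𝔼 → ℝ} (hS : S.Nonempty) (hc : ∀ α ∈ S, 0 < c α) (τ : 𝔼) :
    ∑ α ∈ S, pfun S c α τ = 1 := by
  have hχ := (chi_pos hS hc τ).ne'
  simp only [pfun, div_eq_mul_inv, ← Finset.sum_mul]
  rw [← chiSc, mul_inv_cancel₀ hχ]

lemma muSc_eq_sum (S : Finset 𝔼) (c : 𝔼 → ℝ) (τ : 𝔼) :
    muSc S c τ = ∑ α ∈ S, pfun S c α τ • α := by
  rw [muSc, Finset.smul_sum]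
  refine Finset.sum_congr rfl fun α _ => ?_
  rw [smul_smul, pfun, div_eq_inv_mul]

lemma sum_pfun_inner {S : Finset 𝔼} {c : 𝔼 → ℝ} (hS : S.Nonempty) (hc : ∀ α ∈ S, 0 < c α)
    (τ v : 𝔼) : ∑ α ∈ S, pfun S c α τ * ⟪α - muSc S c τ, v⟫ = 0 := by
  have h1 : ∑ α ∈ S, pfun S c α τ * ⟪α, v⟫ = ⟪muSc S c τ, v⟫ := by
    rw [muSc_eq_sum, sum_inner]
    exact Finset.sum_congr rfl fun α _ => (real_inner_smul_left _ _ _).symm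
  calc ∑ α ∈ S, pfun S c α τ * ⟪α - muSc S c τ, v⟫
      = ∑ α ∈ S, (pfun S c α τ * ⟪α, v⟫ - pfun S c α τ * ⟪muSc S c τ, v⟫) := by
        refine Finset.sum_congr rfl fun α _ => ?_
        rw [inner_sub_left]; ring
    _ = ⟪muSc S c τ, v⟫ - (∑ α ∈ S, pfun S c α τ) * ⟪muSc S c τ, v⟫ := by
        rw [Finset.sum_sub_distrib, h1, ← Finset.sum_mul]
    _ = 0 := by rw [sum_pfun hS hc]; ring

lemma hasFDerivAt_muSc {S : Finset 𝔼} {c : 𝔼 → ℝ} (hS : S.Nonempty) (hc : ∀ α ∈ S, 0 < c α)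
    (τ₀ : 𝔼) :
    HasFDerivAt (muSc S c) (covCLM S (fun α => pfun S c α τ₀) (muSc S c τ₀)) τ₀ := by
  have h : HasFDerivAt (fun τ => ∑ α ∈ S, pfun S c α τ • α)
      (∑ α ∈ S, (pfun S c α τ₀ • innerSL ℝ (α - muSc S c τ₀)).smulRight α) τ₀ :=
    HasFDerivAt.fun_sum fun α hα => (hasFDerivAt_pfun hS hc α hα τ₀).smul_const α
  have he : muSc S c = fun τ => ∑ α ∈ S, pfun S c α τ • α := funext (muSc_eq_sum S c)
  have hD : (∑ α ∈ S, (pfun S c α τ₀ • innerSL ℝ (α - muSc S c τ₀)).smulRight α)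
      = covCLM S (fun α => pfun S c α τ₀) (muSc S c τ₀) := by
    refine ContinuousLinearMap.ext fun v => ?_
    rw [covCLM_apply, ContinuousLinearMap.sum_apply, eq_comm, ← sub_eq_zero,
      ← Finset.sum_sub_distrib]
    have key : ∀ α ∈ S, (pfun S c α τ₀ * ⟪α - muSc S c τ₀, v⟫) • (α - muSc S c τ₀)
        - ((pfun S c α τ₀ • innerSL ℝ (α - muSc S c τ₀)).smulRight α) v
        = -((pfun S c α τ₀ * ⟪α - muSc S c τ₀, v⟫) • muSc S c τ₀) := by
      intro α _
      simp only [ContinuousLinearMap.smulRight_apply, ContinuousLinearMap.smul_apply,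
        innerSL_apply_apply, smul_eq_mul, smul_sub]
      abel
    rw [Finset.sum_congr rfl key]
    simp only [← neg_smul]
    rw [← Finset.sum_smul, Finset.sum_neg_distrib, sum_pfun_inner hS hc, neg_zero, zero_smul]
  exact hD ▸ (h.congr_of_eventuallyEq (Filter.Eventually.of_forall (muSc_eq_sum S c)))

lemma contDiff_muSc {S : Finset 𝔼} {c : 𝔼 → ℝ} (hS : S.Nonempty) (hc : ∀ α ∈ S, 0 < c α) :
    ContDiff ℝ (⊤ : ℕ∞) (muSc S c) := by
  have hg : ∀ α : 𝔼, ContDiff ℝ (⊤ : ℕ∞) (fun τ : 𝔼 => c α * Real.exp ⟪α, τ⟫) := fun α =>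
    contDiff_const.mul (Real.contDiff_exp.comp (contDiff_const.inner ℝ contDiff_id))
  have hχ : ContDiff ℝ (⊤ : ℕ∞) (chiSc S c) := ContDiff.sum fun α _ => hg α
  exact (hχ.inv fun τ => (chi_pos hS hc τ).ne').smul
    (ContDiff.sum fun α _ => (hg α).smul (contDiff_const (c := α)))

lemma contDiff_pfun {S : Finset 𝔼} {c : 𝔼 → ℝ} (hS : S.Nonempty) (hc : ∀ α ∈ S, 0 < c α)
    (α : 𝔼) : ContDiff ℝ (⊤ : ℕ∞) (pfun S c α) := by
  have hg : ContDiff ℝ (⊤ : ℕ∞) (fun τ : 𝔼 => c α * Real.exp ⟪α, τ⟫) :=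
    contDiff_const.mul (Real.contDiff_exp.comp (contDiff_const.inner ℝ contDiff_id))
  have hχ : ContDiff ℝ (⊤ : ℕ∞) (chiSc S c) := ContDiff.sum fun β _ =>
    contDiff_const.mul (Real.contDiff_exp.comp (contDiff_const.inner ℝ contDiff_id))
  exact hg.div hχ fun τ => (chi_pos hS hc τ).ne'

lemma covCLM_ker {S : Finset 𝔼} {w : 𝔼 → ℝ} (hw : ∀ α ∈ S, 0 < w α) {x : 𝔼}
    (hx : x ∈ interior (convexHull ℝ (S : Set 𝔼))) (v : 𝔼) (hv : covCLM S w x v = 0) :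
    v = 0 := by
  have hsum : ∑ α ∈ S, w α * (⟪α - x, v⟫ * ⟪α - x, v⟫) = 0 := by
    have : ⟪covCLM S w x v, v⟫ = ∑ α ∈ S, w α * (⟪α - x, v⟫ * ⟪α - x, v⟫) := by
      rw [covCLM_apply, sum_inner]
      refine Finset.sum_congr rfl fun α _ => ?_
      rw [real_inner_smul_left]; ring
    rw [hv] at this
    simpa [inner_zero_left] using this.symm
  have hzero : ∀ α ∈ S, ⟪α - x, v⟫ = 0 := by
    intro α hα
    have h1 := (Finset.sum_eq_zero_iff_of_nonneg fun β hβ =>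
      mul_nonneg (hw β hβ).le (mul_self_nonneg _)).mp hsum α hα
    rcases mul_eq_zero.mp h1 with h | h
    · exact absurd h (hw α hα).ne'
    · exact mul_self_eq_zero.mp h
  have hlin : IsLinearMap ℝ (fun z : 𝔼 => ⟪z, v⟫) :=
    ⟨fun a b => inner_add_left a b v, fun r a => real_inner_smul_left a v r⟩
  have hsub : (S : Set 𝔼) ⊆ {z : 𝔼 | ⟪z, v⟫ = ⟪x, v⟫} := by
    intro α hα
    have := hzero α hα
    rw [inner_sub_left] at this
    simpa [sub_eq_zero] using this
  have hhull : convexHull ℝ (S : Set 𝔼) ⊆ {z : 𝔼 | ⟪z, v⟫ = ⟪x, v⟫} :=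
    convexHull_min hsub (convex_hyperplane hlin _)
  obtain ⟨ε, hε, hball⟩ := Metric.isOpen_iff.mp isOpen_interior x hx
  set t : ℝ := ε / (2 * (‖v‖ + 1)) with ht
  have htpos : 0 < t := div_pos hε (by positivity)
  have hmem : x + t • v ∈ convexHull ℝ (S : Set 𝔼) := by
    refine interior_subset (hball ?_)
    rw [Metric.mem_ball, dist_eq_norm, add_sub_cancel_left, norm_smul, Real.norm_eq_abs,
      abs_of_pos htpos, ht]
    calc ε / (2 * (‖v‖ + 1)) * ‖v‖ < ε / (2 * (‖v‖ + 1)) * (‖v‖ + 1) := by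
          exact mul_lt_mul_of_pos_left (by linarith) htpos
      _ = ε / 2 := by field_simp
      _ < ε := by linarith
  have := hhull hmem
  simp only [Set.mem_setOf_eq, inner_add_left, real_inner_smul_left] at this
  have hvv : ⟪v, v⟫ = 0 := by
    have : t * ⟪v, v⟫ = 0 := by linarith
    exact (mul_eq_zero.mp this).resolve_left htpos.ne'
  exact inner_self_eq_zero.mp hvv

lemma covCLM_equiv {S : Finset 𝔼} {w : 𝔼 → ℝ} (hw : ∀ α ∈ S, 0 < w α) {x : 𝔼}
    (hx : x ∈ interior (convexHull ℝ (S : Set 𝔼))) :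
    ∃ e : 𝔼 ≃L[ℝ] 𝔼, (e : 𝔼 →L[ℝ] 𝔼) = covCLM S w x := by
  have hinj : Function.Injective (covCLM S w x) := by
    intro a b hab
    have := covCLM_ker hw hx (a - b) (by rw [map_sub, hab, sub_self])
    exact sub_eq_zero.mp this
  exact ⟨(LinearEquiv.ofInjectiveEndo ((covCLM S w x) : 𝔼 →ₗ[ℝ] 𝔼)
    hinj).toContinuousLinearEquiv, by ext v; rfl⟩

lemma ring_inverse_of_equiv (e : 𝔼 ≃L[ℝ] 𝔼) :
    Ring.inverse (e : 𝔼 →L[ℝ] 𝔼) = (e.symm : 𝔼 →L[ℝ] 𝔼) := by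
  have : (e : 𝔼 →L[ℝ] 𝔼) = (e.toUnit : 𝔼 →L[ℝ] 𝔼) := rfl
  rw [this, Ring.inverse_unit]
  rfl

lemma mSc_eq_pfun (S : Finset 𝔼) (c : 𝔼 → ℝ) (τSc : 𝔼 → 𝔼) (α x : 𝔼) :
    mSc S c τSc α x = pfun S c α (τSc x) := rfl

end Aux

/-- For a finite `S` with `conv(S) = P`, `P° ≠ ∅`, and a weight `c > 0`,
the map `x ↦ Σ_{α∈S} m_{S,c,α}(x) δ_α` is a finitely supported Bernstein measure on `P` with
support `S` whose defining matrix is `K(x) = A_{S,c}(x)⁻¹`. -/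
theorem finitelySupported_bernsteinMeasure_exists
    {m : ℕ} (S : Finset (EuclideanSpace ℝ (Fin m)))
    (c : EuclideanSpace ℝ (Fin m) → ℝ) (hc : ∀ α ∈ S, 0 < c α)
    (P : Set (EuclideanSpace ℝ (Fin m)))
    (hP : P = convexHull ℝ (S : Set (EuclideanSpace ℝ (Fin m))))
    (hPo : (interior P).Nonempty)
    (τSc : EuclideanSpace ℝ (Fin m) → EuclideanSpace ℝ (Fin m))
    (hτ₁ : ∀ τ, τSc (muSc S c τ) = τ)
    (hτ₂ : ∀ x ∈ interior P, muSc S c (τSc x) = x)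
    (M : EuclideanSpace ℝ (Fin m) → EuclideanSpace ℝ (Fin m) → ℝ)
    (hMcont : ∀ α ∈ S, ContinuousOn (M α) P)
    (hMeq : ∀ α ∈ S, ∀ x ∈ interior P, M α x = mSc S c τSc α x)
    (hMsum : ∀ x ∈ P, ∑ α ∈ S, M α x = 1)
    (hMbary : ∀ x ∈ P, ∑ α ∈ S, M α x • α = x) :
    ∃ B : BernsteinMeasure m P,
      (∀ x ∈ P, B.meas x = ∑ α ∈ S, ENNReal.ofReal (M α x) • Measure.dirac α) ∧
      (∀ x ∈ interior P, ∀ α ∈ S, B.meas x {α} ≠ 0) ∧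
      (∀ x ∈ P, B.meas x ((S : Set (EuclideanSpace ℝ (Fin m))))ᶜ = 0) ∧
      (∀ x ∈ interior P, ∀ v : EuclideanSpace ℝ (Fin m),
        B.K x (AScMap S M x v) = v ∧ AScMap S M x (B.K x v) = v) := by
  classical
  have hS : S.Nonempty := by
    rcases hPo with ⟨x0, hx0⟩
    have hxP : x0 ∈ P := interior_subset hx0
    rcases Finset.eq_empty_or_nonempty S with h | h
    · rw [hP, h] at hxP; simp at hxP
    · exact h
  have hPconv : Convex ℝ P := hP ▸ convex_convexHull ℝ _
  have hSP : (S : Set (EuclideanSpace ℝ (Fin m))) ⊆ P := hP ▸ subset_convexHull ℝ _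
  have hMpos : ∀ α ∈ S, ∀ x ∈ interior P, 0 < M α x := by
    intro α hα x hx
    rw [hMeq α hα x hx, mSc_eq_pfun]
    exact div_pos (mul_pos (hc α hα) (Real.exp_pos _)) (chi_pos hS hc _)
  have hMnonneg : ∀ α ∈ S, ∀ x ∈ P, 0 ≤ M α x := by
    intro α hα x hx
    obtain ⟨y₀, hy₀⟩ := hPo
    have ht : ∀ n : ℕ, (1:ℝ)/(n+1) ∈ Set.Ioc (0:ℝ) 1 := fun n =>
      ⟨by positivity, by rw [div_le_one (by positivity)]; linarith [Nat.cast_nonneg (α := ℝ) n]⟩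
    set u : ℕ → EuclideanSpace ℝ (Fin m) := fun n => x + ((1:ℝ)/(n+1)) • (y₀ - x) with hu
    have humem : ∀ n, u n ∈ interior P := fun n =>
      hPconv.add_smul_sub_mem_interior hx hy₀ (ht n)
    have hulim : Tendsto u atTop (𝓝 x) := by
      have h1 : Tendsto (fun n : ℕ => (1:ℝ)/(n+1)) atTop (𝓝 0) :=
        tendsto_one_div_add_atTop_nhds_zero_nat
      have h2 := (h1.smul_const (y₀ - x)).const_add x
      simpa [hu] using h2
    have hMx : Tendsto (fun n => M α (u n)) atTop (𝓝 (M α x)) := by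
      have hcw : ContinuousWithinAt (M α) P x := (hMcont α hα) x hx
      exact hcw.tendsto.comp (tendsto_nhdsWithin_iff.mpr
        ⟨hulim, Filter.Eventually.of_forall fun n => interior_subset (humem n)⟩)
    exact ge_of_tendsto' hMx fun n => (hMpos α hα (u n) (humem n)).le
  set meas : EuclideanSpace ℝ (Fin m) → Measure (EuclideanSpace ℝ (Fin m)) :=
    fun x => ∑ α ∈ S, ENNReal.ofReal (M α x) • Measure.dirac α with hmeas
  have BintP : ∀ {F : Type} [NormedAddCommGroup F] [NormedSpace ℝ F] [CompleteSpace F],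
      ∀ (f : EuclideanSpace ℝ (Fin m) → F), ∀ x ∈ P,
      ∫ z, f z ∂(meas x) = ∑ α ∈ S, M α x • f α := by
    intro F _ _ _ f x hx
    rw [hmeas]
    rw [integral_diracSum S (fun α => M α x) f]
    exact Finset.sum_congr rfl fun α hα => by
      rw [ENNReal.toReal_ofReal (hMnonneg α hα x hx)]
  -- the matrix field
  set A : EuclideanSpace ℝ (Fin m) → (EuclideanSpace ℝ (Fin m) →L[ℝ] EuclideanSpace ℝ (Fin m)) :=
    fun x => covCLM S (fun α => M α x) x with hA
  have hAeq : ∀ x : EuclideanSpace ℝ (Fin m),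
      ∃ e : EuclideanSpace ℝ (Fin m) ≃L[ℝ] EuclideanSpace ℝ (Fin m),
        x ∈ interior P → (e : EuclideanSpace ℝ (Fin m) →L[ℝ] EuclideanSpace ℝ (Fin m)) = A x := by
    intro x
    by_cases hx : x ∈ interior P
    · obtain ⟨e, he⟩ := covCLM_equiv (fun α hα => hMpos α hα x hx) (by rw [hP] at hx; exact hx)
      exact ⟨e, fun _ => he⟩
    · exact ⟨ContinuousLinearEquiv.refl ℝ _, fun h => absurd h hx⟩
  choose eqv heqv using hAeq
  set K : EuclideanSpace ℝ (Fin m) → (EuclideanSpace ℝ (Fin m) →L[ℝ] EuclideanSpace ℝ (Fin m)) :=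
    fun x => Ring.inverse (A x) with hK
  have hKeq : ∀ x ∈ interior P, K x
      = ((eqv x).symm : EuclideanSpace ℝ (Fin m) →L[ℝ] EuclideanSpace ℝ (Fin m)) := by
    intro x hx
    have h0 : K x = Ring.inverse (A x) := rfl
    rw [h0, ← heqv x hx, ring_inverse_of_equiv]
  have hAapp : ∀ x ∈ interior P, ∀ w, A x ((eqv x).symm w) = w := by
    intro x hx w
    rw [← heqv x hx]
    simp
  have hsymmK : ∀ x ∈ interior P, ∀ u w, ⟪(eqv x).symm u, w⟫ = ⟪u, (eqv x).symm w⟫ := by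
    intro x hx u w
    have hsm : ∀ a b, ⟪A x a, b⟫ = ⟪a, A x b⟫ := fun a b => covCLM_symm S (fun α => M α x) x a b
    calc ⟪(eqv x).symm u, w⟫ = ⟪(eqv x).symm u, A x ((eqv x).symm w)⟫ := by rw [hAapp x hx]
      _ = ⟪A x ((eqv x).symm u), (eqv x).symm w⟫ := (hsm _ _).symm
      _ = ⟪u, (eqv x).symm w⟫ := by rw [hAapp x hx]
  -- smoothness of τSc on the interior
  have hτsmooth : ∀ x ∈ interior P, ContDiffAt ℝ (⊤ : ℕ∞) τSc x ∧
      HasFDerivAt τSc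
        ((eqv x).symm : EuclideanSpace ℝ (Fin m) →L[ℝ] EuclideanSpace ℝ (Fin m)) x := by
    intro x hx
    have hfd0 := hasFDerivAt_muSc hS hc (τSc x)
    have hAE : A x = covCLM S (fun α => pfun S c α (τSc x)) (muSc S c (τSc x)) := by
      rw [hτ₂ x hx, hA]
      simp only [covCLM]
      exact Finset.sum_congr rfl fun α hα => by
        rw [hMeq α hα x hx, mSc_eq_pfun]
    have hfd : HasFDerivAt (muSc S c)
        ((eqv x : EuclideanSpace ℝ (Fin m) →L[ℝ] EuclideanSpace ℝ (Fin m))) (τSc x) := by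
      rw [heqv x hx, hAE]; exact hfd0
    have hcd : ContDiffAt ℝ (⊤ : ℕ∞) (muSc S c) (τSc x) := (contDiff_muSc hS hc).contDiffAt
    have hstrict : HasStrictFDerivAt (muSc S c)
        ((eqv x : EuclideanSpace ℝ (Fin m) →L[ℝ] EuclideanSpace ℝ (Fin m))) (τSc x) :=
      hcd.hasStrictFDerivAt' hfd (by simp)
    have hginv : ContDiffAt ℝ (⊤ : ℕ∞) (hstrict.localInverse (muSc S c) (eqv x) (τSc x))
        (muSc S c (τSc x)) := hcd.to_localInverse hfd (by simp)
    have hgdf : HasStrictFDerivAt (hstrict.localInverse (muSc S c) (eqv x) (τSc x))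
        ((eqv x).symm : EuclideanSpace ℝ (Fin m) →L[ℝ] EuclideanSpace ℝ (Fin m))
        (muSc S c (τSc x)) := hstrict.to_localInverse
    have hrinv : ∀ᶠ y in 𝓝 (muSc S c (τSc x)),
        muSc S c (hstrict.localInverse (muSc S c) (eqv x) (τSc x) y) = y :=
      hstrict.eventually_right_inverse
    rw [hτ₂ x hx] at hginv hgdf hrinv
    have hev : τSc =ᶠ[𝓝 x] hstrict.localInverse (muSc S c) (eqv x) (τSc x) := by
      filter_upwards [hrinv, isOpen_interior.mem_nhds hx] with y h1 h2
      exact (Function.LeftInverse.injective hτ₁) (by rw [hτ₂ y h2, h1])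
    exact ⟨hginv.congr_of_eventuallyEq hev, hgdf.hasFDerivAt.congr_of_eventuallyEq hev⟩
  -- derivatives of the weight functions
  have hMdiff : ∀ α ∈ S, ∀ x ∈ interior P,
      HasFDerivAt (M α) (((M α x) • innerSL ℝ (α - x)).comp
        ((eqv x).symm : EuclideanSpace ℝ (Fin m) →L[ℝ] EuclideanSpace ℝ (Fin m))) x ∧
      ContDiffAt ℝ (⊤ : ℕ∞) (M α) x := by
    intro α hα x hx
    obtain ⟨hτcd, hτfd⟩ := hτsmooth x hx
    have hpf := (hasFDerivAt_pfun hS hc α hα (τSc x)).comp x hτfd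
    rw [hτ₂ x hx] at hpf
    have h1 : pfun S c α (τSc x) = M α x := by rw [hMeq α hα x hx, mSc_eq_pfun]
    rw [h1] at hpf
    have hev : (M α) =ᶠ[𝓝 x] (fun y => pfun S c α (τSc y)) := by
      filter_upwards [isOpen_interior.mem_nhds hx] with y hy
      rw [hMeq α hα y hy, mSc_eq_pfun]
    exact ⟨hpf.congr_of_eventuallyEq hev,
      (((contDiff_pfun hS hc α).contDiffAt).comp x hτcd).congr_of_eventuallyEq hev⟩
  have hmeasval : ∀ (x : EuclideanSpace ℝ (Fin m)) (s : Set (EuclideanSpace ℝ (Fin m))),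
      meas x s = ∑ α ∈ S, ENNReal.ofReal (M α x) * (Measure.dirac α s) := by
    intro x s
    rw [hmeas]
    rw [Measure.coe_finset_sum, Finset.sum_apply]
    exact Finset.sum_congr rfl fun α hα => by rw [Measure.smul_apply, smul_eq_mul]
  refine ⟨⟨meas, ?_, ?_, ?_, ?_, ?_, K, ?_, ?_, ?_⟩, ?_, ?_, ?_, ?_⟩
  · -- isProb
    intro x hx
    constructor
    rw [hmeasval]
    have : ∀ α ∈ S, ENNReal.ofReal (M α x) * (Measure.dirac α Set.univ)
        = ENNReal.ofReal (M α x) := fun α hα => by simp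
    rw [Finset.sum_congr rfl this, ← ENNReal.ofReal_sum_of_nonneg
      (fun α hα => hMnonneg α hα x hx), hMsum x hx, ENNReal.ofReal_one]
  · -- suppIn
    intro x hx
    rw [hmeasval]
    refine Finset.sum_eq_zero fun α hα => ?_
    rw [Measure.dirac_apply]
    simp [hSP hα]
  · -- bary
    intro x hx
    rw [BintP (fun z => z) x hx]
    exact hMbary x hx
  · -- weakCont
    intro f hf
    exact ContinuousOn.congr
      (continuousOn_finset_sum S fun α hα => (hMcont α hα).smul continuousOn_const)
      (fun x hx => BintP f x hx)
  · -- smoothOn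
    intro f hf
    intro x hx
    have hev : (fun y => ∫ z, f z ∂(meas y)) =ᶠ[𝓝 x] (fun y => ∑ α ∈ S, M α y • f α) := by
      filter_upwards [isOpen_interior.mem_nhds hx] with y hy
      exact BintP f y (interior_subset hy)
    have hcd : ContDiffAt ℝ (⊤ : ℕ∞) (fun y => ∑ α ∈ S, M α y • f α) x :=
      ContDiffAt.sum fun α hα => ((hMdiff α hα x hx).2).smul contDiffAt_const
    exact (hcd.congr_of_eventuallyEq hev).contDiffWithinAt
  · -- K_symm
    intro x hx u v
    rw [hKeq x hx]
    exact hsymmK x hx u v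
  · -- K_smooth
    intro x hx
    have hAcd : ContDiffAt ℝ (⊤ : ℕ∞) A x := by
      have hev : A =ᶠ[𝓝 x] (fun y => ∑ α ∈ S,
          pfun S c α (τSc y) • ((innerSL ℝ (α - y)).smulRight (α - y))) := by
        filter_upwards [isOpen_interior.mem_nhds hx] with y hy
        rw [hA]
        simp only [covCLM]
        exact Finset.sum_congr rfl fun α hα => by rw [hMeq α hα y hy, mSc_eq_pfun]
      refine ContDiffAt.congr_of_eventuallyEq ?_ hev
      exact ContDiffAt.sum fun α hα =>
        (((contDiff_pfun hS hc α).contDiffAt).comp x (hτsmooth x hx).1).smul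
          (contDiff_rankOne α).contDiffAt
    have hu : IsUnit (A x) := ⟨(eqv x).toUnit, heqv x hx⟩
    have hri := contDiffAt_ringInverse ℝ (n := (⊤ : ℕ∞)) hu.unit
    rw [hu.unit_spec] at hri
    exact (hri.comp x hAcd).contDiffWithinAt
  · -- grad_eq
    intro f hf x hx v
    have hev : (fun y => ∫ z, f z ∂(meas y)) =ᶠ[𝓝 x] (fun y => ∑ α ∈ S, M α y • f α) := by
      filter_upwards [isOpen_interior.mem_nhds hx] with y hy
      exact BintP f y (interior_subset hy)
    have hder : HasFDerivAt (fun y => ∑ α ∈ S, M α y • f α)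
        (∑ α ∈ S, (((M α x) • innerSL ℝ (α - x)).comp
          ((eqv x).symm : EuclideanSpace ℝ (Fin m) →L[ℝ] EuclideanSpace ℝ (Fin m))).smulRight
          (f α)) x :=
      HasFDerivAt.fun_sum fun α hα => ((hMdiff α hα x hx).1).smul_const (f α)
    have hder' := hder.congr_of_eventuallyEq hev
    rw [hder'.fderiv]
    rw [BintP (fun z => f z * ((⟪K x (z - x), v⟫ : ℝ) : ℂ)) x (interior_subset hx)]
    rw [ContinuousLinearMap.sum_apply]
    refine Finset.sum_congr rfl fun α hα => ?_
    rw [hKeq x hx]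
    simp only [ContinuousLinearMap.smulRight_apply, ContinuousLinearMap.comp_apply,
      ContinuousLinearMap.smul_apply, innerSL_apply_apply, smul_eq_mul]
    have hsy : ⟪((eqv x).symm :
        EuclideanSpace ℝ (Fin m) →L[ℝ] EuclideanSpace ℝ (Fin m)) (α - x), v⟫
        = ⟪α - x, (eqv x).symm v⟫ := hsymmK x hx (α - x) v
    rw [hsy, mul_smul]
    congr 1
    rw [Complex.real_smul, mul_comm]
    norm_num
  · -- meas formula
    intro x hx
    rfl
  · -- singletons charged
    intro x hx α hα h0
    rw [hmeasval] at h0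
    have h1 := (Finset.sum_eq_zero_iff.mp h0) α hα
    rw [Measure.dirac_apply] at h1
    simp only [Set.indicator_of_mem (Set.mem_singleton α), Pi.one_apply, mul_one] at h1
    exact absurd (ENNReal.ofReal_eq_zero.mp h1) (not_le.mpr (hMpos α hα x hx))
  · -- supported on S
    intro x hx
    rw [hmeasval]
    refine Finset.sum_eq_zero fun α hα => ?_
    rw [Measure.dirac_apply]
    simp [hα]
  · -- inverse identities
    intro x hx v
    have hAS : ∀ w, AScMap S M x w = A x w := fun w => (covCLM_apply S (fun α => M α x) x w).symm
    constructor
    · rw [hAS]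
      show K x (A x v) = v
      rw [hKeq x hx, ← heqv x hx]
      simp
    · show AScMap S M x (K x v) = v
      rw [hAS, hKeq x hx, ← heqv x hx]
      simp


end
end

section
/- Let B be a finitely supported Bernstein measure on P with support S (a finite subset of P whose convex hull is P). Then there exists a weight function c : S → ℝ_{>0} such that B = B_{S,c}; that is, writing dB_x = Σ_{α∈S} m_α(x) δ_α, one has m_α(x) = m_{S,c,α}(x) = c(α)e^{⟨α,τ_{S,c}(x)⟩}/χ_{S,c}(τ_{S,c}(x)) for every α ∈ S and x ∈ P°. -/
/- Setting: `P ⊆ ℝ^m` is a compact convex polytope (convex hull of a finite set) with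
nonempty interior.  `M(P)` is modelled by measures on `ℝ^m` that are probability measures
giving full mass to `P`; weak-* continuity of `x ↦ dB_x` is expressed by continuity of
`x ↦ ∫ f dB_x` for every `f` continuous on `P`. -/

open MeasureTheory Filter Set
open scoped RealInnerProductSpace ENNReal Topology

noncomputable section

lemma integrable_dirac'_s13 {α E : Type*} [MeasurableSpace α] [MeasurableSingletonClass α]
    [NormedAddCommGroup E] (g : α → E) (a : α) : Integrable g (Measure.dirac a) := by
  have h : g =ᵐ[Measure.dirac a] fun _ => g a := by
    rw [MeasureTheory.ae_dirac_eq]; exact Filter.eventually_pure.2 rfl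
  exact (integrable_const (g a)).congr h.symm

lemma integral_finset_diracs {α E : Type*} [MeasurableSpace α] [MeasurableSingletonClass α]
    [NormedAddCommGroup E] [NormedSpace ℝ E] [CompleteSpace E] (S : Finset α) (w : α → ℝ)
    (hw : ∀ a ∈ S, 0 ≤ w a) (g : α → E) :
    ∫ z, g z ∂(∑ a ∈ S, ENNReal.ofReal (w a) • Measure.dirac a) = ∑ a ∈ S, w a • g a := by
  rw [integral_finset_sum_measure (fun a ha =>
    (integrable_dirac'_s13 g a).smul_measure (by simp : ENNReal.ofReal (w a) ≠ ⊤))]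
  refine Finset.sum_congr rfl fun a ha => ?_
  rw [integral_smul_measure, integral_dirac, ENNReal.toReal_ofReal (hw a ha)]


lemma const_of_hasFDerivAt_zero {E : Type*} [NormedAddCommGroup E] [NormedSpace ℝ E]
    {U : Set E} (hU : Convex ℝ U) {f : E → ℝ}
    (hf : ∀ x ∈ U, HasFDerivAt f (0 : E →L[ℝ] ℝ) x) {x y : E} (hx : x ∈ U) (hy : y ∈ U) :
    f x = f y := by
  have := hU.norm_image_sub_le_of_norm_hasFDerivWithin_le
    (fun z hz => (hf z hz).hasFDerivWithinAt) (C := 0) (by simp) hy hx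
  simpa [sub_eq_zero] using this


local instance (priority := low) (γ : Type*) : DecidableEq γ := Classical.decEq γ

/-- A continuous bump that is 1 at `α` and 0 at other points of `S`. -/
def bump {m : ℕ} (S : Finset (EuclideanSpace ℝ (Fin m))) (α z : EuclideanSpace ℝ (Fin m)) : ℝ :=
  ∏ β ∈ S.erase α, (‖z - β‖ ^ 2 / ‖α - β‖ ^ 2)

lemma bump_continuous {m : ℕ} (S : Finset (EuclideanSpace ℝ (Fin m)))
    (α : EuclideanSpace ℝ (Fin m)) : Continuous (bump S α) := by
  refine continuous_finset_prod _ fun β _ => ?_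
  exact (((continuous_id.sub continuous_const).norm.pow 2).div_const _)

lemma bump_self {m : ℕ} (S : Finset (EuclideanSpace ℝ (Fin m)))
    (α : EuclideanSpace ℝ (Fin m)) : bump S α α = 1 := by
  refine Finset.prod_eq_one fun β hβ => ?_
  have hne : α - β ≠ 0 := sub_ne_zero.2 (Finset.ne_of_mem_erase hβ).symm
  exact div_self (pow_ne_zero 2 (norm_ne_zero_iff.2 hne))

lemma bump_other {m : ℕ} {S : Finset (EuclideanSpace ℝ (Fin m))}
    {α β : EuclideanSpace ℝ (Fin m)} (hβ : β ∈ S) (hne : β ≠ α) : bump S α β = 0 := by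
  refine Finset.prod_eq_zero (Finset.mem_erase.2 ⟨hne, hβ⟩) ?_
  simp

/-- The key analytic fact: the log of each coefficient is differentiable, with gradient
`K x (α - x)`. -/
lemma bernstein_log_coeff_deriv {m : ℕ} {P : Set (EuclideanSpace ℝ (Fin m))}
    (B : BernsteinMeasure m P) (S : Finset (EuclideanSpace ℝ (Fin m)))
    (mcoef : EuclideanSpace ℝ (Fin m) → EuclideanSpace ℝ (Fin m) → ℝ)
    (hmeas : ∀ x ∈ P, B.meas x = ∑ α ∈ S, ENNReal.ofReal (mcoef α x) • Measure.dirac α)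
    (hpos : ∀ x ∈ interior P, ∀ α ∈ S, 0 < mcoef α x)
    {α : EuclideanSpace ℝ (Fin m)} (hα : α ∈ S)
    {x : EuclideanSpace ℝ (Fin m)} (hx : x ∈ interior P) :
    HasFDerivAt (fun y => Real.log (mcoef α y)) (innerSL ℝ (B.K x (α - x))) x := by
  set f : EuclideanSpace ℝ (Fin m) → ℂ := fun z => ((bump S α z : ℝ) : ℂ) with hf_def
  have hf : Continuous f := Complex.continuous_ofReal.comp (bump_continuous S α)
  have heval : ∀ y ∈ interior P, (∫ z, f z ∂(B.meas y)) = ((mcoef α y : ℝ) : ℂ) := by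
    intro y hy
    rw [hmeas y (interior_subset hy),
      integral_finset_diracs S (fun β => mcoef β y) (fun β hβ => (hpos y hy β hβ).le) f]
    rw [Finset.sum_eq_single α (fun β hβ hne => by simp [hf_def, bump_other hβ hne])
      (fun h => absurd hα h)]
    simp [hf_def, bump_self, Complex.real_smul]
  have hdiff : DifferentiableAt ℝ (fun y => ∫ z, f z ∂(B.meas y)) x :=
    ((B.smoothOn f hf.continuousOn).differentiableOn (by simp)).differentiableAt
      (isOpen_interior.mem_nhds hx)
  have hfd : ∀ v, fderiv ℝ (fun y => ∫ z, f z ∂(B.meas y)) x v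
      = ((mcoef α x * ⟪B.K x (α - x), v⟫ : ℝ) : ℂ) := by
    intro v
    rw [B.grad_eq f hf.continuousOn x hx v, hmeas x (interior_subset hx),
      integral_finset_diracs S (fun β => mcoef β x) (fun β hβ => (hpos x hx β hβ).le)]
    rw [Finset.sum_eq_single α (fun β hβ hne => by simp [hf_def, bump_other hβ hne])
      (fun h => absurd hα h)]
    simp [hf_def, bump_self, Complex.real_smul]
  have hMF : HasFDerivAt (fun y => (∫ z, f z ∂(B.meas y)).re)
      (Complex.reCLM.comp (fderiv ℝ (fun y => ∫ z, f z ∂(B.meas y)) x)) x :=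
    Complex.reCLM.hasFDerivAt.comp x hdiff.hasFDerivAt
  have hMe : (fun y => (∫ z, f z ∂(B.meas y)).re) =ᶠ[𝓝 x] fun y => mcoef α y := by
    filter_upwards [isOpen_interior.mem_nhds hx] with y hy
    rw [heval y hy, Complex.ofReal_re]
  have hM2 : HasFDerivAt (fun y => mcoef α y)
      (Complex.reCLM.comp (fderiv ℝ (fun y => ∫ z, f z ∂(B.meas y)) x)) x :=
    (Filter.EventuallyEq.hasFDerivAt_iff hMe).1 hMF
  have hlog := hM2.log (ne_of_gt (hpos x hx α hα))
  refine hlog.congr_fderiv ?_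
  ext v
  simp only [ContinuousLinearMap.coe_smul', Pi.smul_apply, ContinuousLinearMap.coe_comp',
    Function.comp_apply, Complex.reCLM_apply, hfd v, Complex.ofReal_re, innerSL_apply_apply]
  rw [smul_eq_mul, inv_mul_cancel_left₀ (ne_of_gt (hpos x hx α hα))]


lemma chiSc_pos {m : ℕ} {S : Finset (EuclideanSpace ℝ (Fin m))}
    {c : EuclideanSpace ℝ (Fin m) → ℝ} (hc : ∀ α ∈ S, 0 < c α) (hS : S.Nonempty)
    (τ : EuclideanSpace ℝ (Fin m)) : 0 < chiSc S c τ :=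
  Finset.sum_pos (fun α hα => mul_pos (hc α hα) (Real.exp_pos _)) hS

lemma sum_weights_smul_eq_muSc {m : ℕ} {S : Finset (EuclideanSpace ℝ (Fin m))}
    {c : EuclideanSpace ℝ (Fin m) → ℝ} (τ : EuclideanSpace ℝ (Fin m)) :
    ∑ α ∈ S, (c α * Real.exp ⟪α, τ⟫ / chiSc S c τ) • α = muSc S c τ := by
  rw [muSc, Finset.smul_sum]
  refine Finset.sum_congr rfl fun α hα => ?_
  rw [smul_smul, div_eq_inv_mul]

lemma muSc_injective {m : ℕ} {S : Finset (EuclideanSpace ℝ (Fin m))}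
    {c : EuclideanSpace ℝ (Fin m) → ℝ} (hc : ∀ α ∈ S, 0 < c α)
    {β₀ : EuclideanSpace ℝ (Fin m)} (hβ₀ : β₀ ∈ S)
    (hd : ∀ d : EuclideanSpace ℝ (Fin m), (∀ α ∈ S, ⟪α - β₀, d⟫ = 0) → d = 0) :
    Function.Injective (muSc S c) := by
  intro τ₁ τ₂ h
  have hS : S.Nonempty := ⟨β₀, hβ₀⟩
  have hchi₁ := chiSc_pos hc hS τ₁
  have hchi₂ := chiSc_pos hc hS τ₂
  set p : EuclideanSpace ℝ (Fin m) → ℝ := fun α => c α * Real.exp ⟪α, τ₁⟫ / chiSc S c τ₁ with hp_def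
  set q : EuclideanSpace ℝ (Fin m) → ℝ := fun α => c α * Real.exp ⟪α, τ₂⟫ / chiSc S c τ₂ with hq_def
  have hp : ∀ α ∈ S, 0 < p α := fun α hα =>
    div_pos (mul_pos (hc α hα) (Real.exp_pos _)) hchi₁
  have hq : ∀ α ∈ S, 0 < q α := fun α hα =>
    div_pos (mul_pos (hc α hα) (Real.exp_pos _)) hchi₂
  have hsum_p : ∑ α ∈ S, p α = 1 := by
    simp only [hp_def, ← Finset.sum_div]
    exact div_self (ne_of_gt hchi₁)
  have hsum_q : ∑ α ∈ S, q α = 1 := by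
    simp only [hq_def, ← Finset.sum_div]
    exact div_self (ne_of_gt hchi₂)
  have hbary : ∑ α ∈ S, p α • α = ∑ α ∈ S, q α • α := by
    simp only [hp_def, hq_def]
    rw [sum_weights_smul_eq_muSc, sum_weights_smul_eq_muSc, h]
  set d : EuclideanSpace ℝ (Fin m) := τ₂ - τ₁ with hd_def
  set L : ℝ := Real.log (chiSc S c τ₁) - Real.log (chiSc S c τ₂) with hL_def
  have hlog : ∀ α ∈ S, Real.log (q α / p α) = ⟪α, d⟫ + L := by
    intro α hα
    rw [Real.log_div (ne_of_gt (hq α hα)) (ne_of_gt (hp α hα))]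
    simp only [hp_def, hq_def]
    rw [Real.log_div (ne_of_gt (mul_pos (hc α hα) (Real.exp_pos _))) (ne_of_gt hchi₂),
        Real.log_div (ne_of_gt (mul_pos (hc α hα) (Real.exp_pos _))) (ne_of_gt hchi₁),
        Real.log_mul (ne_of_gt (hc α hα)) (ne_of_gt (Real.exp_pos _)),
        Real.log_mul (ne_of_gt (hc α hα)) (ne_of_gt (Real.exp_pos _)),
        Real.log_exp, Real.log_exp, hd_def, hL_def, inner_sub_right]
    ring
  set A : ℝ := ∑ α ∈ S, p α * Real.log (q α / p α) with hA_def
  set B : ℝ := ∑ α ∈ S, q α * Real.log (p α / q α) with hB_def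
  have hterm : ∀ α ∈ S, p α * (q α / p α - 1) = q α - p α := by
    intro α hα
    have h0 : p α ≠ 0 := ne_of_gt (hp α hα)
    field_simp
  have htermq : ∀ α ∈ S, q α * (p α / q α - 1) = p α - q α := by
    intro α hα
    have h0 : q α ≠ 0 := ne_of_gt (hq α hα)
    field_simp
  have hA_le : A ≤ 0 := by
    have h1 : A ≤ ∑ α ∈ S, (q α - p α) := by
      refine Finset.sum_le_sum fun α hα => ?_
      rw [← hterm α hα]
      exact mul_le_mul_of_nonneg_left
        (Real.log_le_sub_one_of_pos (div_pos (hq α hα) (hp α hα))) (hp α hα).le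
    rwa [Finset.sum_sub_distrib, hsum_p, hsum_q, sub_self] at h1
  have hB_le : B ≤ 0 := by
    have h1 : B ≤ ∑ α ∈ S, (p α - q α) := by
      refine Finset.sum_le_sum fun α hα => ?_
      rw [← htermq α hα]
      exact mul_le_mul_of_nonneg_left
        (Real.log_le_sub_one_of_pos (div_pos (hp α hα) (hq α hα))) (hq α hα).le
    rwa [Finset.sum_sub_distrib, hsum_p, hsum_q, sub_self] at h1
  have hlog' : ∀ α ∈ S, Real.log (p α / q α) = -(⟪α, d⟫ + L) := by
    intro α hα
    rw [← hlog α hα, ← Real.log_inv, inv_div]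
  have hA_eval : A = ⟪∑ α ∈ S, p α • α, d⟫ + L := by
    have h2 : A = ∑ α ∈ S, (⟪p α • α, d⟫ + p α * L) := by
      refine Finset.sum_congr rfl fun α hα => ?_
      rw [hlog α hα, real_inner_smul_left]
      ring
    rw [h2, Finset.sum_add_distrib, ← sum_inner, ← Finset.sum_mul, hsum_p, one_mul]
  have hB_eval : B = -(⟪∑ α ∈ S, q α • α, d⟫ + L) := by
    have h2 : B = ∑ α ∈ S, -(⟪q α • α, d⟫ + q α * L) := by
      refine Finset.sum_congr rfl fun α hα => ?_
      rw [hlog' α hα, real_inner_smul_left]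
      ring
    rw [h2, Finset.sum_neg_distrib, Finset.sum_add_distrib, ← sum_inner, ← Finset.sum_mul,
      hsum_q, one_mul]
  have hAB : A + B = 0 := by
    rw [hA_eval, hB_eval, hbary]; ring
  have hA0 : A = 0 := by linarith
  have hpq : ∀ α ∈ S, p α = q α := by
    by_contra hcon
    push_neg at hcon
    obtain ⟨γ, hγ, hne⟩ := hcon
    have hstrict : A < ∑ α ∈ S, (q α - p α) := by
      refine Finset.sum_lt_sum (fun α hα => ?_) ⟨γ, hγ, ?_⟩
      · rw [← hterm α hα]
        exact mul_le_mul_of_nonneg_left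
          (Real.log_le_sub_one_of_pos (div_pos (hq α hα) (hp α hα))) (hp α hα).le
      · rw [← hterm γ hγ]
        refine mul_lt_mul_of_pos_left ?_ (hp γ hγ)
        refine Real.log_lt_sub_one_of_pos (div_pos (hq γ hγ) (hp γ hγ)) ?_
        refine fun h1 => hne ?_
        exact ((div_eq_one_iff_eq (ne_of_gt (hp γ hγ))).1 h1).symm
    rw [Finset.sum_sub_distrib, hsum_p, hsum_q, sub_self, ← hA0] at hstrict
    exact lt_irrefl _ hstrict
  have hinner : ∀ α ∈ S, ⟪α, d⟫ = -L := by
    intro α hα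
    have h0 : Real.log (q α / p α) = 0 := by
      rw [hpq α hα, div_self (ne_of_gt (hq α hα)), Real.log_one]
    have := hlog α hα
    rw [h0] at this
    linarith
  have hdz : d = 0 := by
    refine hd d fun α hα => ?_
    rw [inner_sub_left, hinner α hα, hinner β₀ hβ₀]
    ring
  rw [hd_def, sub_eq_zero] at hdz
  exact hdz.symm


/-- If a family of weights gives a linear relation among the `α - β₀`, then the corresponding
combination of the functions `g α - g β₀` is constant on `U`. -/
lemma sum_rel_zero {m : ℕ} {U : Set (EuclideanSpace ℝ (Fin m))} (hU : Convex ℝ U)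
    {S : Finset (EuclideanSpace ℝ (Fin m))} {β₀ : EuclideanSpace ℝ (Fin m)} (hβ₀ : β₀ ∈ S)
    (g : EuclideanSpace ℝ (Fin m) → EuclideanSpace ℝ (Fin m) → ℝ)
    (Kf : EuclideanSpace ℝ (Fin m) → (EuclideanSpace ℝ (Fin m) →L[ℝ] EuclideanSpace ℝ (Fin m)))
    (hGd : ∀ α ∈ S, ∀ x ∈ U, HasFDerivAt (g α) (innerSL ℝ (Kf x (α - x))) x)
    {x₀ : EuclideanSpace ℝ (Fin m)} (hx₀ : x₀ ∈ U)
    (w : {γ // γ ∈ S} → ℝ)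
    (hw : ∑ γ : {γ // γ ∈ S}, w γ • ((γ : EuclideanSpace ℝ (Fin m)) - β₀) = 0)
    {x : EuclideanSpace ℝ (Fin m)} (hx : x ∈ U) :
    ∑ γ : {γ // γ ∈ S}, w γ *
      ((g (γ : EuclideanSpace ℝ (Fin m)) x - g β₀ x)
        - (g (γ : EuclideanSpace ℝ (Fin m)) x₀ - g β₀ x₀)) = 0 := by
  have hWd : ∀ y ∈ U,
      HasFDerivAt (fun y' => ∑ γ : {γ // γ ∈ S},
        w γ * (g (γ : EuclideanSpace ℝ (Fin m)) y' - g β₀ y'))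
        (0 : EuclideanSpace ℝ (Fin m) →L[ℝ] ℝ) y := by
    intro y hy
    have h1 : HasFDerivAt (fun y' => ∑ γ : {γ // γ ∈ S},
        w γ * (g (γ : EuclideanSpace ℝ (Fin m)) y' - g β₀ y'))
        (∑ γ : {γ // γ ∈ S}, w γ •
          (innerSL ℝ (Kf y ((γ : EuclideanSpace ℝ (Fin m)) - y)) - innerSL ℝ (Kf y (β₀ - y)))) y :=
      HasFDerivAt.fun_sum fun γ _ => ((hGd γ γ.2 y hy).sub (hGd β₀ hβ₀ y hy)).const_mul (w γ)
    refine h1.congr_fderiv ?_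
    ext v
    simp only [ContinuousLinearMap.zero_apply, ContinuousLinearMap.coe_sum', Finset.sum_apply,
      ContinuousLinearMap.coe_smul', Pi.smul_apply, ContinuousLinearMap.coe_sub', Pi.sub_apply,
      innerSL_apply_apply, smul_eq_mul]
    have hterm : ∀ γ : {γ // γ ∈ S},
        ⟪Kf y ((γ : EuclideanSpace ℝ (Fin m)) - y), v⟫ - ⟪Kf y (β₀ - y), v⟫
          = ⟪Kf y ((γ : EuclideanSpace ℝ (Fin m)) - β₀), v⟫ := by
      intro γ
      rw [← inner_sub_left, ← map_sub, sub_sub_sub_cancel_right]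
    have h2 : ∑ γ : {γ // γ ∈ S},
        w γ * (⟪Kf y ((γ : EuclideanSpace ℝ (Fin m)) - y), v⟫ - ⟪Kf y (β₀ - y), v⟫)
          = ⟪Kf y (∑ γ : {γ // γ ∈ S}, w γ • ((γ : EuclideanSpace ℝ (Fin m)) - β₀)), v⟫ := by
      rw [map_sum, sum_inner]
      refine Finset.sum_congr rfl fun γ _ => ?_
      rw [hterm γ, _root_.map_smul, real_inner_smul_left]
    rw [h2, hw, map_zero, inner_zero_left]
  have hconst := const_of_hasFDerivAt_zero hU hWd hx hx₀
  have hexp : ∑ γ : {γ // γ ∈ S}, w γ *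
      ((g (γ : EuclideanSpace ℝ (Fin m)) x - g β₀ x)
        - (g (γ : EuclideanSpace ℝ (Fin m)) x₀ - g β₀ x₀))
      = (∑ γ : {γ // γ ∈ S}, w γ * (g (γ : EuclideanSpace ℝ (Fin m)) x - g β₀ x))
        - ∑ γ : {γ // γ ∈ S}, w γ * (g (γ : EuclideanSpace ℝ (Fin m)) x₀ - g β₀ x₀) := by
    rw [← Finset.sum_sub_distrib]
    exact Finset.sum_congr rfl fun γ _ => by ring
  rw [hexp, hconst, sub_self]

/-- Construction of the inverse moment map `τ` from the gradient identity. -/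
lemma exists_tau {m : ℕ} {U : Set (EuclideanSpace ℝ (Fin m))} (hU : Convex ℝ U)
    {S : Finset (EuclideanSpace ℝ (Fin m))} {β₀ : EuclideanSpace ℝ (Fin m)} (hβ₀ : β₀ ∈ S)
    (g : EuclideanSpace ℝ (Fin m) → EuclideanSpace ℝ (Fin m) → ℝ)
    (Kf : EuclideanSpace ℝ (Fin m) → (EuclideanSpace ℝ (Fin m) →L[ℝ] EuclideanSpace ℝ (Fin m)))
    (hGd : ∀ α ∈ S, ∀ x ∈ U, HasFDerivAt (g α) (innerSL ℝ (Kf x (α - x))) x)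
    {x₀ : EuclideanSpace ℝ (Fin m)} (hx₀ : x₀ ∈ U)
    (hspanTop : Submodule.span ℝ
      ((fun α => α - β₀) '' (↑S : Set (EuclideanSpace ℝ (Fin m)))) = ⊤) :
    ∃ τ : EuclideanSpace ℝ (Fin m) → EuclideanSpace ℝ (Fin m),
      ∀ x ∈ U, ∀ α ∈ S, ⟪α - β₀, τ x⟫
        = (g α x - g β₀ x) - (g α x₀ - g β₀ x₀) := by
  classical
  set Q : ({γ // γ ∈ S} → ℝ) →ₗ[ℝ] EuclideanSpace ℝ (Fin m) :=
    { toFun := fun w => ∑ γ : {γ // γ ∈ S}, w γ • ((γ : EuclideanSpace ℝ (Fin m)) - β₀)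
      map_add' := by intro a b; simp only [Pi.add_apply, add_smul, Finset.sum_add_distrib]
      map_smul' := by intro r a; simp only [Pi.smul_apply, smul_eq_mul, RingHom.id_apply, Finset.smul_sum, smul_smul] } with hQ_def
  have hQsingle : ∀ i : {γ // γ ∈ S}, Q (Pi.single i 1) = (i : EuclideanSpace ℝ (Fin m)) - β₀ := by
    intro i
    simp only [hQ_def, LinearMap.coe_mk, AddHom.coe_mk]
    show ∑ γ : {γ // γ ∈ S}, (Pi.single i 1 : {γ // γ ∈ S} → ℝ) γ • ((γ : EuclideanSpace ℝ (Fin m)) - β₀) = _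
    rw [Finset.sum_eq_single i (fun γ _ hne => by simp [Pi.single_apply, hne]) (by simp)]
    simp
  have hQsurj : LinearMap.range Q = ⊤ := by
    rw [eq_top_iff, ← hspanTop]
    refine Submodule.span_le.2 ?_
    rintro _ ⟨α, hα, rfl⟩
    exact ⟨Pi.single ⟨α, hα⟩ 1, hQsingle ⟨α, hα⟩⟩
  obtain ⟨R, hR⟩ := Q.exists_rightInverse_of_surjective hQsurj
  set D : EuclideanSpace ℝ (Fin m) → EuclideanSpace ℝ (Fin m) → ℝ :=
    fun α x => (g α x - g β₀ x) - (g α x₀ - g β₀ x₀) with hD_def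
  set φ : EuclideanSpace ℝ (Fin m) → (({γ // γ ∈ S} → ℝ) →ₗ[ℝ] ℝ) := fun x =>
    { toFun := fun w => ∑ γ : {γ // γ ∈ S}, w γ * D (γ : EuclideanSpace ℝ (Fin m)) x
      map_add' := by intro a b; simp [add_mul, Finset.sum_add_distrib]
      map_smul' := by intro r a; simp [mul_assoc, Finset.mul_sum]
    } with hφ_def
  refine ⟨fun x => (InnerProductSpace.toDual ℝ (EuclideanSpace ℝ (Fin m))).symm
    (LinearMap.toContinuousLinearMap ((φ x).comp R)), ?_⟩
  intro x hx α hα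
  rw [real_inner_comm, InnerProductSpace.toDual_symm_apply]
  have happ : (LinearMap.toContinuousLinearMap ((φ x).comp R)) (α - β₀)
      = (φ x) (R (α - β₀)) := rfl
  rw [happ]
  -- now show (φ x) (R (α - β₀)) = D α x
  have hQR : Q (R (α - β₀)) = α - β₀ := by
    have := LinearMap.congr_fun hR (α - β₀)
    simpa using this
  set w : {γ // γ ∈ S} → ℝ := R (α - β₀) with hw_def
  set w' : {γ // γ ∈ S} → ℝ := w - Pi.single ⟨α, hα⟩ 1 with hw'_def
  have hw'0 : ∑ γ : {γ // γ ∈ S}, w' γ • ((γ : EuclideanSpace ℝ (Fin m)) - β₀) = 0 := by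
    have hsplit : ∑ γ : {γ // γ ∈ S}, w' γ • ((γ : EuclideanSpace ℝ (Fin m)) - β₀)
        = Q w - Q (Pi.single ⟨α, hα⟩ 1) := by
      rw [← map_sub]
      rfl
    rw [hsplit, hQsingle, hQR]
    exact sub_self _
  have h0 := sum_rel_zero hU hβ₀ g Kf hGd hx₀ w' hw'0 hx
  have hsingle : ∑ γ : {γ // γ ∈ S}, (Pi.single (⟨α, hα⟩ : {γ // γ ∈ S}) 1 : _ → ℝ) γ
      * D (γ : EuclideanSpace ℝ (Fin m)) x = D α x := by
    rw [Finset.sum_eq_single (⟨α, hα⟩ : {γ // γ ∈ S})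
      (fun γ _ hne => by simp [Pi.single_apply, hne]) (by simp)]
    simp
  have hsum : ∑ γ : {γ // γ ∈ S}, w' γ
      * ((g (γ : EuclideanSpace ℝ (Fin m)) x - g β₀ x)
        - (g (γ : EuclideanSpace ℝ (Fin m)) x₀ - g β₀ x₀))
      = (φ x) w - D α x := by
    rw [← hsingle]
    simp only [hw'_def, Pi.sub_apply, sub_mul]
    rw [Finset.sum_sub_distrib]
    rfl
  rw [hsum] at h0
  have : (φ x) w = D α x := by linarith
  exact this.trans rfl


/-- Every finitely supported Bernstein measure `B` on `P` with support `S`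
arises from a weight `c : S → ℝ_{>0}`: its coefficients are `m_α = m_{S,c,α}`. -/
theorem finitelySupported_bernsteinMeasure_eq_weighted
    {m : ℕ} (P : Set (EuclideanSpace ℝ (Fin m)))
    (hPo : (interior P).Nonempty)
    (B : BernsteinMeasure m P)
    (S : Finset (EuclideanSpace ℝ (Fin m)))
    (hSP : (S : Set (EuclideanSpace ℝ (Fin m))) ⊆ P)
    (hconv : convexHull ℝ (S : Set (EuclideanSpace ℝ (Fin m))) = P)
    (mcoef : EuclideanSpace ℝ (Fin m) → EuclideanSpace ℝ (Fin m) → ℝ)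
    (hmeas : ∀ x ∈ P, B.meas x = ∑ α ∈ S, ENNReal.ofReal (mcoef α x) • Measure.dirac α)
    (hpos : ∀ x ∈ interior P, ∀ α ∈ S, 0 < mcoef α x) :
    ∃ c : EuclideanSpace ℝ (Fin m) → ℝ, (∀ α ∈ S, 0 < c α) ∧
      ∃ τSc : EuclideanSpace ℝ (Fin m) → EuclideanSpace ℝ (Fin m),
        (∀ τ, τSc (muSc S c τ) = τ) ∧
        (∀ x ∈ interior P, muSc S c (τSc x) = x) ∧
        (∀ x ∈ interior P, ∀ α ∈ S, mcoef α x = mSc S c τSc α x) := by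
  classical
  obtain ⟨x₀, hx₀⟩ := hPo
  have hPconv : Convex ℝ P := hconv ▸ convex_convexHull ℝ _
  have hIPconv : Convex ℝ (interior P) := hPconv.interior
  have hSne : S.Nonempty := by
    rcases S.eq_empty_or_nonempty with h | h
    · exfalso
      rw [h] at hconv
      simp only [Finset.coe_empty, convexHull_empty] at hconv
      rw [← hconv, interior_empty] at hx₀
      exact hx₀
    · exact h
  obtain ⟨β₀, hβ₀⟩ := hSne
  -- span facts
  have haff : affineSpan ℝ (↑S : Set (EuclideanSpace ℝ (Fin m))) = ⊤ := by
    have h1 : affineSpan ℝ (convexHull ℝ (↑S : Set (EuclideanSpace ℝ (Fin m)))) = ⊤ := by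
      rw [← (convex_convexHull ℝ
        (↑S : Set (EuclideanSpace ℝ (Fin m)))).interior_nonempty_iff_affineSpan_eq_top, hconv]
      exact ⟨x₀, hx₀⟩
    rwa [affineSpan_convexHull] at h1
  have hvs : vectorSpan ℝ (↑S : Set (EuclideanSpace ℝ (Fin m))) = ⊤ := by
    rw [← direction_affineSpan, haff]
    exact AffineSubspace.direction_top ℝ _ _
  have hspanTop : Submodule.span ℝ
      ((fun α => α - β₀) '' (↑S : Set (EuclideanSpace ℝ (Fin m)))) = ⊤ := by
    rw [vectorSpan_eq_span_vsub_set_right ℝ (Finset.mem_coe.2 hβ₀)] at hvs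
    rw [← hvs]
    congr 1
  have hdlem : ∀ d : EuclideanSpace ℝ (Fin m), (∀ α ∈ S, ⟪α - β₀, d⟫ = 0) → d = 0 := by
    intro d hdz
    have hle : Submodule.span ℝ ((fun α => α - β₀) '' (↑S : Set (EuclideanSpace ℝ (Fin m))))
        ≤ LinearMap.ker ((innerSL ℝ d : EuclideanSpace ℝ (Fin m) →L[ℝ] ℝ) :
            EuclideanSpace ℝ (Fin m) →ₗ[ℝ] ℝ) := by
      refine Submodule.span_le.2 ?_
      rintro _ ⟨α, hα, rfl⟩
      simp only [SetLike.mem_coe, LinearMap.mem_ker, ContinuousLinearMap.coe_coe, innerSL_apply_apply]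
      rw [real_inner_comm]
      exact hdz α (Finset.mem_coe.1 hα)
    have hd0 := hle (by rw [hspanTop]; trivial : d ∈ Submodule.span ℝ
      ((fun α => α - β₀) '' (↑S : Set (EuclideanSpace ℝ (Fin m)))))
    rw [LinearMap.mem_ker] at hd0
    have : ⟪d, d⟫ = (0 : ℝ) := by simpa using hd0
    exact inner_self_eq_zero.1 this
  -- coefficient sums
  have hsum1 : ∀ x ∈ interior P, ∑ α ∈ S, mcoef α x = 1 := by
    intro x hx
    have hP : x ∈ P := interior_subset hx
    haveI := B.isProb x hP
    have h1 : ∫ _z, (1 : ℝ) ∂(B.meas x) = 1 := by simp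
    rw [hmeas x hP, integral_finset_diracs S (fun β => mcoef β x)
      (fun β hβ => (hpos x hx β hβ).le) (fun _ => (1 : ℝ))] at h1
    simpa using h1
  have hbar : ∀ x ∈ interior P, ∑ α ∈ S, mcoef α x • α = x := by
    intro x hx
    have hP : x ∈ P := interior_subset hx
    have h1 := B.bary x hP
    rw [hmeas x hP, integral_finset_diracs S (fun β => mcoef β x)
      (fun β hβ => (hpos x hx β hβ).le) (fun z => z)] at h1
    exact h1
  -- derivatives of the logs of the coefficients
  have hGd : ∀ α ∈ S, ∀ x ∈ interior P,
      HasFDerivAt (fun y => Real.log (mcoef α y)) (innerSL ℝ (B.K x (α - x))) x :=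
    fun α hα x hx => bernstein_log_coeff_deriv B S mcoef hmeas hpos hα hx
  -- construction of τ
  obtain ⟨τ, hτ⟩ := exists_tau hIPconv hβ₀ (fun α y => Real.log (mcoef α y)) B.K hGd hx₀ hspanTop
  have hc : ∀ α ∈ S, 0 < (fun α => mcoef α x₀) α := fun α hα => hpos x₀ hx₀ α hα
  have hchi_pos : ∀ t, 0 < chiSc S (fun α => mcoef α x₀) t := chiSc_pos hc ⟨β₀, hβ₀⟩
  -- the main formula
  have hmain : ∀ x ∈ interior P, ∀ α ∈ S, mcoef α x
      = mcoef α x₀ * Real.exp ⟪α, τ x⟫ / chiSc S (fun α => mcoef α x₀) (τ x) := by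
    intro x hx
    have hβx := hpos x hx β₀ hβ₀
    have hβ0 := hpos x₀ hx₀ β₀ hβ₀
    have hform : ∀ α ∈ S, mcoef α x = mcoef α x₀ * Real.exp ⟪α, τ x⟫ *
        (mcoef β₀ x / (mcoef β₀ x₀ * Real.exp ⟪β₀, τ x⟫)) := by
      intro α hα
      have hαx := hpos x hx α hα
      have hα0 := hpos x₀ hx₀ α hα
      have h1 : ⟪α, τ x⟫ - ⟪β₀, τ x⟫
          = (Real.log (mcoef α x) - Real.log (mcoef β₀ x))
            - (Real.log (mcoef α x₀) - Real.log (mcoef β₀ x₀)) := by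
        rw [← inner_sub_left]
        exact hτ x hx α hα
      have hpos_rhs : 0 < mcoef α x₀ * Real.exp ⟪α, τ x⟫ *
          (mcoef β₀ x / (mcoef β₀ x₀ * Real.exp ⟪β₀, τ x⟫)) :=
        mul_pos (mul_pos hα0 (Real.exp_pos _))
          (div_pos hβx (mul_pos hβ0 (Real.exp_pos _)))
      have hlogeq : Real.log (mcoef α x) = Real.log (mcoef α x₀ * Real.exp ⟪α, τ x⟫ *
          (mcoef β₀ x / (mcoef β₀ x₀ * Real.exp ⟪β₀, τ x⟫))) := by
        rw [Real.log_mul (ne_of_gt (mul_pos hα0 (Real.exp_pos _)))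
            (ne_of_gt (div_pos hβx (mul_pos hβ0 (Real.exp_pos _)))),
          Real.log_mul (ne_of_gt hα0) (ne_of_gt (Real.exp_pos _)),
          Real.log_div (ne_of_gt hβx) (ne_of_gt (mul_pos hβ0 (Real.exp_pos _))),
          Real.log_mul (ne_of_gt hβ0) (ne_of_gt (Real.exp_pos _)),
          Real.log_exp, Real.log_exp]
        linarith
      have h2 := congrArg Real.exp hlogeq
      rwa [Real.exp_log hαx, Real.exp_log hpos_rhs] at h2
    have hchit : chiSc S (fun α => mcoef α x₀) (τ x) *
        (mcoef β₀ x / (mcoef β₀ x₀ * Real.exp ⟪β₀, τ x⟫)) = 1 := by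
      have hs := hsum1 x hx
      have hcalc : chiSc S (fun α => mcoef α x₀) (τ x) *
          (mcoef β₀ x / (mcoef β₀ x₀ * Real.exp ⟪β₀, τ x⟫))
          = ∑ α ∈ S, mcoef α x := by
        rw [chiSc, Finset.sum_mul]
        exact Finset.sum_congr rfl fun α hα => (hform α hα).symm
      rw [hcalc, hs]
    intro α hα
    have hchine : chiSc S (fun α => mcoef α x₀) (τ x) ≠ 0 := ne_of_gt (hchi_pos (τ x))
    have ht_eq : mcoef β₀ x / (mcoef β₀ x₀ * Real.exp ⟪β₀, τ x⟫)
        = (chiSc S (fun α => mcoef α x₀) (τ x))⁻¹ := by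
      calc mcoef β₀ x / (mcoef β₀ x₀ * Real.exp ⟪β₀, τ x⟫)
          = (chiSc S (fun α => mcoef α x₀) (τ x))⁻¹ *
            (chiSc S (fun α => mcoef α x₀) (τ x) *
              (mcoef β₀ x / (mcoef β₀ x₀ * Real.exp ⟪β₀, τ x⟫))) := by
            rw [← mul_assoc, inv_mul_cancel₀ hchine, one_mul]
        _ = (chiSc S (fun α => mcoef α x₀) (τ x))⁻¹ := by rw [hchit, mul_one]
    rw [hform α hα, ht_eq, div_eq_mul_inv]
  have hmu : ∀ x ∈ interior P, muSc S (fun α => mcoef α x₀) (τ x) = x := by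
    intro x hx
    rw [← sum_weights_smul_eq_muSc]
    refine (Finset.sum_congr rfl fun α hα => ?_).trans (hbar x hx)
    rw [← hmain x hx α hα]
  have hinj : Function.Injective (muSc S (fun α => mcoef α x₀)) :=
    muSc_injective hc hβ₀ hdlem
  refine ⟨fun α => mcoef α x₀, fun α hα => hpos x₀ hx₀ α hα,
    Function.invFun (muSc S (fun α => mcoef α x₀)),
    Function.leftInverse_invFun hinj, ?_, ?_⟩
  · intro x hx
    exact Function.invFun_eq ⟨τ x, hmu x hx⟩
  · intro x hx α hα
    have h1 : Function.invFun (muSc S (fun α => mcoef α x₀)) x = τ x := by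
      apply hinj
      rw [Function.invFun_eq ⟨τ x, hmu x hx⟩, hmu x hx]
    simp only [mSc]
    rw [h1]
    exact hmain x hx α hα

end
end
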